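/- arXiv:2204.11921 — 10 statements merged into one kernel-verified Lean document; each statement's English description precedes it below -/
import Mathlib

section
/- Suppose ℱ = {(F_ε, N_ε)}_{ε∈(0,1)} is a family of probing maps for the open set 𝔊 ⊆ 𝔅 (relative to 𝔅'), and suppose G ⊆ 𝔊 is ℱ-predominant. Then G is dense in 𝔊 with respect to the norm topology of 𝔅. -/
open MeasureTheory Set

noncomputable section

/-- The coordinate space `ℝ^L`. -/
abbrev ProbeCoord (L : ℕ) := EuclideanSpace ℝ (Fin L)

/-- Index type for `N ∈ ℕ ∪ {∞}` coordinates. -/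
def ProbeIdx (N : ℕ∞) : Type := {i : ℕ // (i : ℕ∞) < N}

/-- The space in which the parameter set `Σ_N` lives: functions from indices to `ℝ^L`. -/
abbrev ProbeSpace (L : ℕ) (N : ℕ∞) := ProbeIdx N → ProbeCoord L

/-- The set `Σ_N`: the product of `N` copies of the closed unit ball of `ℝ^L`. -/
def probeBall (L : ℕ) (N : ℕ∞) : Set (ProbeSpace L N) :=
  {σ | ∀ i, σ i ∈ Metric.closedBall (0 : ProbeCoord L) 1}

/-- The sup-distance `‖σ − τ‖_∞ = sup_j ‖σ_j − τ_j‖` on `Σ_N`. -/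
def probeSupDist {L : ℕ} {N : ℕ∞} (σ τ : ProbeSpace L N) : ℝ :=
  ⨆ i, ‖σ i - τ i‖

/-- Lebesgue measure on the closed unit ball of `ℝ^L`, normalized to total mass `1`. -/
def unitBallMeasure (L : ℕ) : Measure (ProbeCoord L) :=
  (volume (Metric.closedBall (0 : ProbeCoord L) 1))⁻¹ •
    volume.restrict (Metric.closedBall (0 : ProbeCoord L) 1)

/-- `μ` is the product measure `m_{Σ_N} = ⊗_j m` of copies of the normalized Lebesgue measure `m`
on the closed unit ball of `ℝ^L`: it is the (unique) probability measure giving each measurable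
cylinder set its product measure. -/
def IsProbeProductMeasure (L : ℕ) (N : ℕ∞) (μ : Measure (ProbeSpace L N)) : Prop :=
  IsProbabilityMeasure μ ∧
    ∀ (s : Finset (ProbeIdx N)) (A : ProbeIdx N → Set (ProbeCoord L)),
      (∀ i, MeasurableSet (A i)) →
      μ {σ | ∀ i ∈ s, σ i ∈ A i} = ∏ i ∈ s, unitBallMeasure L (A i)

/-- `K` is a bounded subset of the open set `G` of the Banach space `B`: it is norm-bounded and
at positive distance from the complement of `G` (vacuously if `G` is everything). -/
def IsBoundedSubset {B : Type*} [NormedAddCommGroup B] (G K : Set B) : Prop :=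
  K ⊆ G ∧ Bornology.IsBounded K ∧ ∃ c : ℝ, 0 < c ∧ ∀ x ∈ K, ∀ y ∈ Gᶜ, c ≤ dist x y

/-- A family of probing maps `ℱ = {(F_ε, N_ε)}_{ε ∈ (0,1)}` for the open set `G ⊆ B`, relative
to the Banach space `B'` into which `B` embeds via `ι`. -/
structure ProbingFamily (L : ℕ) {B B' : Type*}
    [NormedAddCommGroup B] [NormedSpace ℝ B]
    [NormedAddCommGroup B'] [NormedSpace ℝ B']
    (ι : B →L[ℝ] B') (G : Set B) : Type _ where
  /-- The number `N_ε ∈ ℕ ∪ {∞}` of coordinates of the parameter space `Σ_{N_ε}`. -/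
  N : ℝ → ℕ∞
  /-- The closed bounded exhausting sets `𝔊_ε`. -/
  Gs : ℝ → Set B
  /-- The probing maps `F_ε`. -/
  F : (ε : ℝ) → B → ProbeSpace L (N ε) → B
  Gs_closed : ∀ ε ∈ Ioo (0 : ℝ) 1, IsClosed (Gs ε)
  Gs_bounded : ∀ ε ∈ Ioo (0 : ℝ) 1, IsBoundedSubset G (Gs ε)
  Gs_nested : ∀ ε₁ ∈ Ioo (0 : ℝ) 1, ∀ ε₂ ∈ Ioo (0 : ℝ) 1, ε₁ < ε₂ → Gs ε₂ ⊆ Gs ε₁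
  Gs_union : G ⊆ ⋃ ε ∈ Ioo (0 : ℝ) 1, Gs ε
  Gs_absorbs : ∀ K : Set B, IsBoundedSubset G K →
    ∃ ε₁ > 0, ∀ ε ∈ Ioo (0 : ℝ) 1, ε < ε₁ → K ⊆ Gs ε
  /-- `F_ε` maps `𝔊_ε × Σ_{N_ε}` into `G`. -/
  F_mem : ∀ ε ∈ Ioo (0 : ℝ) 1, ∀ g ∈ Gs ε, ∀ σ ∈ probeBall L (N ε), F ε g σ ∈ G
  /-- `F_ε(g, 0) = g`. -/
  F_zero : ∀ ε ∈ Ioo (0 : ℝ) 1, ∀ g ∈ Gs ε, F ε g 0 = g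
  /-- `F_ε` is continuous on `𝔊_ε × Σ_{N_ε}` (w.r.t. the sup-distance on `Σ_{N_ε}`). -/
  F_cont : ∀ ε ∈ Ioo (0 : ℝ) 1, ∀ g ∈ Gs ε, ∀ σ ∈ probeBall L (N ε), ∀ δ > (0 : ℝ),
    ∃ η > (0 : ℝ), ∀ g' ∈ Gs ε, ∀ σ' ∈ probeBall L (N ε),
      ‖g' - g‖ < η → probeSupDist σ' σ < η → ‖F ε g' σ' - F ε g σ‖ < δ
  /-- Condition (i): `sup_{g ∈ K ∩ 𝔊_ε} sup_σ ‖F_ε(g,σ) − g‖_B → 0` as `ε → 0⁺`. -/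
  F_close : ∀ K : Set B, IsBoundedSubset G K → ∀ δ > (0 : ℝ), ∃ ε₁ > (0 : ℝ),
    ∀ ε ∈ Ioo (0 : ℝ) 1, ε < ε₁ → ∀ g ∈ K ∩ Gs ε, ∀ σ ∈ probeBall L (N ε),
      ‖F ε g σ - g‖ ≤ δ
  /-- Condition (ii): the Lipschitz ratio in `σ` of `ι ∘ F_ε`, measured in `B'`, tends to `0`. -/
  F_lipRatio : ∀ K : Set B, IsBoundedSubset G K → ∀ δ > (0 : ℝ), ∃ ε₁ > (0 : ℝ),
    ∀ ε ∈ Ioo (0 : ℝ) 1, ε < ε₁ → ∀ g ∈ K ∩ Gs ε,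
      ∀ σ₁ ∈ probeBall L (N ε), ∀ σ₂ ∈ probeBall L (N ε),
        ‖ι (F ε g σ₁) - ι (F ε g σ₂)‖ ≤ δ * probeSupDist σ₁ σ₂
  /-- Condition (iii): `(g,σ) ↦ ι(F_ε(g,σ))` is Lipschitz on `𝔊_ε × Σ_{N_ε}`. -/
  F_lip : ∀ ε ∈ Ioo (0 : ℝ) 1, ∃ CL : ℝ, ∀ g ∈ Gs ε, ∀ g' ∈ Gs ε,
    ∀ σ ∈ probeBall L (N ε), ∀ σ' ∈ probeBall L (N ε),
      ‖ι (F ε g σ) - ι (F ε g' σ')‖ ≤ CL * (‖g - g'‖ + probeSupDist σ σ')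
  /-- Condition (iii): for fixed `σ`, `g ↦ ι(F_ε(g,σ))` is Fréchet differentiable and its
  derivative extends to a bounded operator `D` on `B'` (i.e. the derivative is `D ∘ ι`). -/
  F_diff : ∀ ε ∈ Ioo (0 : ℝ) 1, ∀ g ∈ Gs ε, ∀ σ ∈ probeBall L (N ε),
    ∃ D : B' →L[ℝ] B', HasFDerivAt (fun x => ι (F ε x σ)) (D.comp ι) g
  /-- Condition (iii): `‖D_g F̃_ε − I‖_{B'→B'} → 0` uniformly on bounded sets as `ε → 0⁺`. -/
  F_derClose : ∀ K : Set B, IsBoundedSubset G K → ∀ δ > (0 : ℝ), ∃ ε₁ > (0 : ℝ),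
    ∀ ε ∈ Ioo (0 : ℝ) 1, ε < ε₁ → ∀ g ∈ K ∩ Gs ε, ∀ σ ∈ probeBall L (N ε),
      ∀ D : B' →L[ℝ] B', HasFDerivAt (fun x => ι (F ε x σ)) (D.comp ι) g →
        ‖D - ContinuousLinearMap.id ℝ B'‖ ≤ δ

/-- `Lset ⊆ G` is `ℱ`-thin (relative to the product measures `m N` on the parameter spaces). -/
def IsThin (L : ℕ) {B B' : Type*}
    [NormedAddCommGroup B] [NormedSpace ℝ B] [MeasurableSpace B]
    [NormedAddCommGroup B'] [NormedSpace ℝ B']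
    {ι : B →L[ℝ] B'} {G : Set B}
    (m : (N : ℕ∞) → Measure (ProbeSpace L N))
    (P : ProbingFamily L ι G) (Lset : Set B) : Prop :=
  ∀ K : Set B, IsBoundedSubset G K →
    ∃ L₀ : Set B, MeasurableSet L₀ ∧ Lset ⊆ L₀ ∧
      ∃ S : (ε : ℝ) → B → Set (ProbeSpace L (P.N ε)),
        (∀ ε ∈ Ioo (0 : ℝ) 1, K ⊆ P.Gs ε → ∀ g ∈ K,
          MeasurableSet (S ε g) ∧
            {σ ∈ probeBall L (P.N ε) | P.F ε g σ ∈ L₀} ⊆ S ε g) ∧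
        ∀ δ : ENNReal, 0 < δ → ∃ ε₁ > (0 : ℝ),
          ∀ ε ∈ Ioo (0 : ℝ) 1, ε < ε₁ → K ⊆ P.Gs ε → ∀ g ∈ K,
            m (P.N ε) (S ε g) ≤ δ

/-- `Gd ⊆ G` is `ℱ`-predominant if its complement in `G` is `ℱ`-thin. -/
def IsPredominant (L : ℕ) {B B' : Type*}
    [NormedAddCommGroup B] [NormedSpace ℝ B] [MeasurableSpace B]
    [NormedAddCommGroup B'] [NormedSpace ℝ B']
    {ι : B →L[ℝ] B'} {G : Set B}
    (m : (N : ℕ∞) → Measure (ProbeSpace L N))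
    (P : ProbingFamily L ι G) (Gd : Set B) : Prop :=
  IsThin L m P (G \ Gd)

/-
A point `g ∈ G` forms a bounded subset `{g}` of `G`. By thinness of `G \ Gd`, for small `ε` the
parameters `σ` with `F_ε(g, σ) ∉ Gd` lie in a set of measure at most `1/2`, whereas `Σ_{N_ε}` has
full measure; so some `σ ∈ Σ_{N_ε}` gives `F_ε(g, σ) ∈ Gd`, and `F_ε(g, σ)` is close to `g` by (i).
-/

open Filter Topology

instance {N : ℕ∞} : Countable (ProbeIdx N) :=
  inferInstanceAs (Countable {i : ℕ // (i : ℕ∞) < N})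

lemma isBoundedSubset_singleton {B : Type*} [NormedAddCommGroup B] {G : Set B} (hG : IsOpen G)
    {g : B} (hg : g ∈ G) : IsBoundedSubset G {g} := by
  obtain ⟨r, hr, hball⟩ := Metric.isOpen_iff.mp hG g hg
  refine ⟨singleton_subset_iff.mpr hg, Bornology.isBounded_singleton, r, hr, ?_⟩
  rintro x rfl y hy
  by_contra! h
  exact hy (hball (Metric.mem_ball'.mpr h))

lemma eventually_nhdsGT_zero_of_forall_Ioo {p : ℝ → Prop}
    (h : ∃ ε₁ > (0 : ℝ), ∀ ε ∈ Ioo (0 : ℝ) 1, ε < ε₁ → p ε) : ∀ᶠ ε in 𝓝[>] 0, p ε := by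
  obtain ⟨ε₁, hε₁, hp⟩ := h
  filter_upwards [Ioo_mem_nhdsGT (lt_min hε₁ one_pos)] with ε hε
  exact hp ε ⟨hε.1, hε.2.trans_le (min_le_right _ _)⟩ (hε.2.trans_le (min_le_left _ _))

lemma unitBallMeasure_closedBall (L : ℕ) :
    unitBallMeasure L (Metric.closedBall 0 1) = 1 := by
  rw [unitBallMeasure, Measure.smul_apply, Measure.restrict_apply measurableSet_closedBall,
    inter_self, smul_eq_mul, ENNReal.inv_mul_cancel
      (Metric.measure_closedBall_pos _ _ one_pos).ne' measure_closedBall_lt_top.ne]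

lemma measurableSet_probeBall (L : ℕ) (N : ℕ∞) : MeasurableSet (probeBall L N) := by
  have h : probeBall L N = ⋂ i, (fun σ : ProbeSpace L N => σ i) ⁻¹' Metric.closedBall 0 1 := by
    ext σ
    simp [probeBall]
  rw [h]
  exact .iInter fun i => measurable_pi_apply i measurableSet_closedBall

lemma IsProbeProductMeasure.measure_probeBall {L : ℕ} {N : ℕ∞} {μ : Measure (ProbeSpace L N)}
    (hμ : IsProbeProductMeasure L N μ) : μ (probeBall L N) = 1 := by
  have := hμ.1
  have hcoord (i : ProbeIdx N) : ∀ᵐ σ ∂μ, σ i ∈ Metric.closedBall (0 : ProbeCoord L) 1 := by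
    rw [ae_iff_measure_eq (measurable_pi_apply i measurableSet_closedBall).nullMeasurableSet,
      measure_univ]
    simpa [unitBallMeasure_closedBall] using
      hμ.2 {i} (fun _ => Metric.closedBall 0 1) fun _ => measurableSet_closedBall
  rw [← measure_univ (μ := μ),
    ← ae_mem_iff_measure_eq (measurableSet_probeBall L N).nullMeasurableSet]
  exact ae_all_iff.mpr hcoord

section ProbingFamily

variable {L : ℕ} {B B' : Type*} [NormedAddCommGroup B] [NormedSpace ℝ B]
  [NormedAddCommGroup B'] [NormedSpace ℝ B'] {ι : B →L[ℝ] B'} {G K : Set B}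

lemma ProbingFamily.eventually_subset_Gs (P : ProbingFamily L ι G) (hK : IsBoundedSubset G K) :
    ∀ᶠ ε in 𝓝[>] 0, K ⊆ P.Gs ε :=
  eventually_nhdsGT_zero_of_forall_Ioo (P.Gs_absorbs K hK)

lemma ProbingFamily.eventually_dist_F_le (P : ProbingFamily L ι G) (hK : IsBoundedSubset G K)
    {δ : ℝ} (hδ : 0 < δ) :
    ∀ᶠ ε in 𝓝[>] 0, ∀ g ∈ K ∩ P.Gs ε, ∀ σ ∈ probeBall L (P.N ε), dist (P.F ε g σ) g ≤ δ := by
  simpa only [dist_eq_norm] using eventually_nhdsGT_zero_of_forall_Ioo (P.F_close K hK δ hδ)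

lemma IsThin.eventually_exists_probe_mem_diff [MeasurableSpace B]
    {m : (N : ℕ∞) → Measure (ProbeSpace L N)} (hm : ∀ N, IsProbeProductMeasure L N (m N))
    {P : ProbingFamily L ι G} {Lset : Set B} (hthin : IsThin L m P Lset)
    (hK : IsBoundedSubset G K) :
    ∀ᶠ ε in 𝓝[>] 0, ∀ g ∈ K, ∃ σ ∈ probeBall L (P.N ε), P.F ε g σ ∈ G \ Lset := by
  obtain ⟨L₀, -, hL₀, S, hS, hSsmall⟩ := hthin K hK
  filter_upwards [eventually_nhdsGT_zero_of_forall_Ioo (hSsmall (1 / 2) (by norm_num)),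
    P.eventually_subset_Gs hK, Ioo_mem_nhdsGT one_pos] with ε hsmall hKε hε g hg
  -- `Σ_{N_ε}` has measure `1 > 1/2 ≥ m (S ε g)`, so it is not contained in `S ε g`.
  obtain ⟨σ, hσ, hσS⟩ := not_subset.mp fun hsub : probeBall L (P.N ε) ⊆ S ε g => by
    have := ((hm _).measure_probeBall.symm.le.trans (measure_mono hsub)).trans
      (hsmall hKε g hg)
    norm_num at this
  exact ⟨σ, hσ, P.F_mem ε hε g (hKε hg) σ hσ,
    fun hL => hσS ((hS ε hε hKε g hg).2 ⟨hσ, hL₀ hL⟩)⟩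

end ProbingFamily

theorem predominant_dense_general
    (L : ℕ) {B B' : Type*}
    [NormedAddCommGroup B] [NormedSpace ℝ B] [MeasurableSpace B]
    [NormedAddCommGroup B'] [NormedSpace ℝ B']
    (ι : B →L[ℝ] B')
    (G : Set B) (hG : IsOpen G)
    (m : (N : ℕ∞) → Measure (ProbeSpace L N))
    (hm : ∀ N : ℕ∞, IsProbeProductMeasure L N (m N))
    (P : ProbingFamily L ι G)
    (Gd : Set B) (hpre : IsPredominant L m P Gd) :
    G ⊆ closure Gd := by
  intro g hg
  have hK := isBoundedSubset_singleton hG hg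
  refine Metric.mem_closure_iff.mpr fun δ hδ => ?_
  obtain ⟨ε, hgε, hclose, hprobe⟩ := ((P.eventually_subset_Gs hK).and <|
    (P.eventually_dist_F_le hK (half_pos hδ)).and
      (IsThin.eventually_exists_probe_mem_diff hm hpre hK)).exists
  obtain ⟨σ, hσ, hFG, hFGd⟩ := hprobe g rfl
  refine ⟨P.F ε g σ, by_contra fun h => hFGd ⟨hFG, h⟩, ?_⟩
  calc dist g (P.F ε g σ) = dist (P.F ε g σ) g := dist_comm _ _
    _ ≤ δ / 2 := hclose g ⟨rfl, hgε rfl⟩ σ hσ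
    _ < δ := half_lt_self hδ

/-- If `ℱ` is a family of probing maps for the open set `G ⊆ B` (relative to
`B'`) and `Gd ⊆ G` is `ℱ`-predominant, then `Gd` is dense in `G` for the norm topology of `B`. -/
theorem predominant_dense
    (L : ℕ) (hL : 1 ≤ L) {B B' : Type*}
    [NormedAddCommGroup B] [NormedSpace ℝ B] [MeasurableSpace B] [BorelSpace B]
    [NormedAddCommGroup B'] [NormedSpace ℝ B']
    (ι : B →L[ℝ] B') (hι : Function.Injective ι) (hιdense : DenseRange ι)
    (G : Set B) (hG : IsOpen G)
    (m : (N : ℕ∞) → Measure (ProbeSpace L N))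
    (hm : ∀ N : ℕ∞, IsProbeProductMeasure L N (m N))
    (P : ProbingFamily L ι G)
    (Gd : Set B) (hGd : Gd ⊆ G) (hpre : IsPredominant L m P Gd) :
    G ⊆ closure Gd :=
  predominant_dense_general L ι G hG m hm P Gd hpre

end
end

section
/- Let n ∈ ℕ and N₀ ∈ ℕ. Take 𝔅 = 𝔅' = ℝⁿ with ι the identity and 𝔊 = ℝⁿ, and let ℱ = {(F_ε, N_ε)}_{ε∈(0,1)} be a family of probing maps for ℝⁿ (relative to ℝⁿ) such that N_ε < N₀ for all ε (in particular every N_ε is finite). If G ⊆ ℝⁿ is ℱ-predominant, then G has full Lebesgue measure: the set ℝⁿ ∖ G is contained in a Lebesgue-null set, i.e. its Lebesgue outer measure is 0. -/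
open MeasureTheory Set

noncomputable section

open scoped ENNReal NNReal

/-- A finiteness instance for `ProbeIdx N` when `N` is bounded by a natural number. -/
def probeIdxFintype (N : ℕ∞) (N₀ : ℕ) (h : N < N₀) : Fintype (ProbeIdx N) :=
  Fintype.ofInjective (fun x : ProbeIdx N =>
    (⟨x.1, by exact_mod_cast x.2.trans h⟩ : Fin N₀))
    (fun a b hab => Subtype.ext (congrArg Fin.val hab))

set_option maxHeartbeats 2000000 in
/-- Take `B = B' = ℝⁿ` (as Euclidean space), `ι` the identity and `G = ℝⁿ`.
If `ℱ` is a family of probing maps for `ℝⁿ` with `N_ε < N₀ < ∞` for all `ε`, and `Gd ⊆ ℝⁿ` is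
`ℱ`-predominant, then `Gd` has full Lebesgue measure: the Lebesgue (outer) measure of
`ℝⁿ ∖ Gd` is `0`. -/
theorem predominant_full_measure
    (L : ℕ) (hL : 1 ≤ L) (n : ℕ) (N₀ : ℕ)
    (m : (N : ℕ∞) → Measure (ProbeSpace L N))
    (hm : ∀ N : ℕ∞, IsProbeProductMeasure L N (m N))
    (P : ProbingFamily L (ContinuousLinearMap.id ℝ (EuclideanSpace ℝ (Fin n)))
      (Set.univ : Set (EuclideanSpace ℝ (Fin n))))
    (hN : ∀ ε ∈ Ioo (0 : ℝ) 1, P.N ε < (N₀ : ℕ∞))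
    (Gd : Set (EuclideanSpace ℝ (Fin n))) (hpre : IsPredominant L m P Gd) :
    volume ((Set.univ : Set (EuclideanSpace ℝ (Fin n))) \ Gd) = 0 := by
  classical
  have key : ∀ k : ℕ, volume ((Set.univ \ Gd) ∩
      Metric.closedBall (0 : EuclideanSpace ℝ (Fin n)) (k : ℝ)) = 0 := by
    intro k
    set r : ℝ := (k : ℝ) with hrdef
    have hr0 : (0:ℝ) ≤ r := Nat.cast_nonneg k
    set K : Set (EuclideanSpace ℝ (Fin n)) := Metric.closedBall 0 (r + 2) with hKdef
    have hKmeas : MeasurableSet K := measurableSet_closedBall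
    have hKb : IsBoundedSubset (Set.univ : Set (EuclideanSpace ℝ (Fin n))) K :=
      ⟨subset_univ _, Metric.isBounded_closedBall, 1, one_pos,
        fun x _ y hy => absurd (mem_univ y) hy⟩
    obtain ⟨L₀, hL₀meas, hLsub, S, hS, hSδ⟩ := hpre K hKb
    have main : volume (L₀ ∩ Metric.closedBall (0 : EuclideanSpace ℝ (Fin n)) r) = 0 := by
      set v := volume (L₀ ∩ Metric.closedBall (0 : EuclideanSpace ℝ (Fin n)) r) with hvdef
      have hvfin : v ≠ ∞ :=
        ((measure_mono inter_subset_right).trans_lt measure_closedBall_lt_top).ne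
      by_contra hv0
      have bound : ∀ δ' : ℝ≥0∞, 0 < δ' → v ≤ δ' := by
        intro δ' hδ'
        set C := volume K with hCdef
        have hCfin : C ≠ ∞ := measure_closedBall_lt_top.ne
        have hCtop : 2 * C + 1 ≠ ∞ :=
          ENNReal.add_ne_top.mpr ⟨ENNReal.mul_ne_top (by norm_num) hCfin, ENNReal.one_ne_top⟩
        set δ : ℝ≥0∞ := δ' / (2 * C + 1) with hδdef
        have hδpos : 0 < δ := ENNReal.div_pos hδ'.ne' hCtop
        obtain ⟨ε₁, hε₁pos, hε₁⟩ := hSδ δ hδpos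
        have hdet : ENNReal.ofReal
            |(ContinuousLinearMap.id ℝ (EuclideanSpace ℝ (Fin n))).det| < ((2:ℝ≥0):ℝ≥0∞) := by
          simp [ContinuousLinearMap.det]
        obtain ⟨δ₀, hPm, hδ₀pos⟩ :=
          ((MeasureTheory.addHaar_image_le_mul_of_det_lt volume
            (ContinuousLinearMap.id ℝ (EuclideanSpace ℝ (Fin n))) hdet).and
              self_mem_nhdsWithin).exists
        set c : ℝ≥0 := δ₀ ⊓ Real.toNNReal (1 / (r + 2)) with hcdef
        have hc0 : (0:ℝ≥0) < c := lt_min hδ₀pos (Real.toNNReal_pos.mpr (by positivity))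
        have hcδ₀ : c ≤ δ₀ := min_le_left _ _
        have hcle : (c:ℝ) * (r + 2) ≤ 1 := by
          have h1 : (c:ℝ) ≤ 1 / (r + 2) := by
            have h2 := NNReal.coe_le_coe.mpr (min_le_right δ₀ (Real.toNNReal (1 / (r + 2))))
            rwa [Real.coe_toNNReal _ (by positivity)] at h2
          calc (c:ℝ) * (r + 2) ≤ (1/(r+2)) * (r+2) := by nlinarith
            _ = 1 := by field_simp
        obtain ⟨ε₂, hε₂pos, hε₂⟩ := P.F_derClose K hKb c (by exact_mod_cast hc0)
        obtain ⟨ε₃, hε₃pos, hε₃⟩ := P.F_close K hKb 1 one_pos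
        obtain ⟨ε₄, hε₄pos, hε₄⟩ := P.Gs_absorbs K hKb
        set M : ℝ := min (min (min ε₁ ε₂) (min ε₃ ε₄)) 1 with hMdef
        have hMpos : 0 < M := lt_min (lt_min (lt_min hε₁pos hε₂pos) (lt_min hε₃pos hε₄pos)) one_pos
        have hM1 : M ≤ ε₁ := le_trans (min_le_left _ _) (le_trans (min_le_left _ _) (min_le_left _ _))
        have hM2 : M ≤ ε₂ := le_trans (min_le_left _ _) (le_trans (min_le_left _ _) (min_le_right _ _))
        have hM3 : M ≤ ε₃ := le_trans (min_le_left _ _) (le_trans (min_le_right _ _) (min_le_left _ _))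
        have hM4 : M ≤ ε₄ := le_trans (min_le_left _ _) (le_trans (min_le_right _ _) (min_le_right _ _))
        have hM5 : M ≤ 1 := min_le_right _ _
        set ε : ℝ := M / 2 with hεdef
        have hεI : ε ∈ Ioo (0:ℝ) 1 := ⟨by positivity, by rw [hεdef]; linarith⟩
        have hεlt₁ : ε < ε₁ := by rw [hεdef]; linarith
        have hεlt₂ : ε < ε₂ := by rw [hεdef]; linarith
        have hεlt₃ : ε < ε₃ := by rw [hεdef]; linarith
        have hεlt₄ : ε < ε₄ := by rw [hεdef]; linarith
        have hKG : K ⊆ P.Gs ε := hε₄ ε hεI hεlt₄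
        have hNfin : P.N ε < (N₀:ℕ∞) := hN ε hεI
        haveI := probeIdxFintype (P.N ε) N₀ hNfin
        set mN := m (P.N ε) with hmNdef
        haveI : IsProbabilityMeasure mN := (hm (P.N ε)).1
        set pb := probeBall L (P.N ε) with hpbdef
        have hpbm : MeasurableSet pb := by
          have hpbe : pb = ⋂ i, (fun σ : ProbeSpace L (P.N ε) => σ i) ⁻¹'
              Metric.closedBall 0 1 := by
            ext σ; simp [hpbdef, probeBall]
          rw [hpbe]
          exact MeasurableSet.iInter fun i => (measurable_pi_apply i) measurableSet_closedBall
        have hub : unitBallMeasure L (Metric.closedBall 0 1) = 1 := by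
          rw [unitBallMeasure, Measure.smul_apply, Measure.restrict_apply measurableSet_closedBall,
            inter_self, smul_eq_mul]
          exact ENNReal.inv_mul_cancel (Metric.measure_closedBall_pos volume _ one_pos).ne'
            measure_closedBall_lt_top.ne
        have hpb1 : mN pb = 1 := by
          have h2 := (hm (P.N ε)).2 Finset.univ (fun _ => Metric.closedBall 0 1)
            (fun _ => measurableSet_closedBall)
          have h3 : {σ : ProbeSpace L (P.N ε) | ∀ i ∈ Finset.univ,
              σ i ∈ Metric.closedBall (0:ProbeCoord L) 1} = pb := by
            ext σ; simp [hpbdef, probeBall]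
          rw [h3] at h2
          rw [← hmNdef] at h2
          rw [h2]
          simp [hub]
        have hpbc : mN pbᶜ = 0 := by
          rw [measure_compl hpbm (measure_ne_top _ _), hpb1, measure_univ, tsub_self]
        set μK := volume.restrict K with hμKdef
        haveI : IsFiniteMeasure μK := by
          constructor
          rw [hμKdef, Measure.restrict_apply_univ]
          exact measure_closedBall_lt_top
        set ν := μK.prod mN with hνdef
        set φ : EuclideanSpace ℝ (Fin n) × ProbeSpace L (P.N ε) → EuclideanSpace ℝ (Fin n) :=
          fun p => P.F ε p.1 p.2 with hφdef
        have hcont : ContinuousOn φ ((P.Gs ε) ×ˢ pb) := by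
          intro p hp
          rw [Metric.continuousWithinAt_iff]
          intro d hd
          obtain ⟨η, hη, hF⟩ := P.F_cont ε hεI p.1 hp.1 p.2 hp.2 d hd
          refine ⟨η, hη, ?_⟩
          intro q hq hdist
          have hqp : dist q p = max (dist q.1 p.1) (dist q.2 p.2) := Prod.dist_eq
          have hd1 : ‖q.1 - p.1‖ < η := by
            rw [← dist_eq_norm]
            exact lt_of_le_of_lt (by rw [hqp]; exact le_max_left _ _ : dist q.1 p.1 ≤ dist q p) hdist
          have hle : probeSupDist q.2 p.2 ≤ dist q.2 p.2 :=
            Real.iSup_le (fun i => by rw [← dist_eq_norm]; exact dist_le_pi_dist q.2 p.2 i)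
              dist_nonneg
          have hd2 : probeSupDist q.2 p.2 < η :=
            hle.trans_lt (lt_of_le_of_lt (by rw [hqp]; exact le_max_right _ _ :
              dist q.2 p.2 ≤ dist q p) hdist)
          rw [dist_eq_norm]
          exact hF q.1 hq.1 q.2 hq.2 hd1 hd2
        have hGsm : MeasurableSet ((P.Gs ε) ×ˢ pb) :=
          ((P.Gs_closed ε hεI).measurableSet).prod hpbm
        have hνKpb : ν ((K ×ˢ pb)ᶜ) = 0 := by
          rw [Set.compl_prod_eq_union]
          refine le_antisymm (le_trans (measure_union_le _ _) ?_) (by simp)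
          have e1 : ν (Kᶜ ×ˢ (univ : Set (ProbeSpace L (P.N ε)))) = 0 := by
            rw [hνdef, Measure.prod_prod, hμKdef, Measure.restrict_apply hKmeas.compl,
              compl_inter_self]
            simp
          have e2 : ν ((univ : Set (EuclideanSpace ℝ (Fin n))) ×ˢ pbᶜ) = 0 := by
            rw [hνdef, Measure.prod_prod, hpbc, mul_zero]
          rw [e1, e2]
          simp
        have hνfull : ν.restrict (K ×ˢ pb) = ν := by
          apply Measure.restrict_eq_self_of_ae_mem
          rw [ae_iff]
          exact hνKpb
        have hφae : AEMeasurable φ ν := by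
          have h1 : AEMeasurable φ (ν.restrict ((P.Gs ε) ×ˢ pb)) := hcont.aemeasurable hGsm
          have h2 : ν.restrict (K ×ˢ pb) ≤ ν.restrict ((P.Gs ε) ×ˢ pb) :=
            Measure.restrict_mono (Set.prod_mono hKG Subset.rfl) le_rfl
          rw [← hνfull]
          exact h1.mono_measure h2
        set ψ := hφae.mk φ with hψdef
        have hψm : Measurable ψ := hφae.measurable_mk
        have hψeq : φ =ᵐ[ν] ψ := hφae.ae_eq_mk
        set Z := toMeasurable ν {p | φ p ≠ ψ p} with hZdef
        have hZm : MeasurableSet Z := measurableSet_toMeasurable ν _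
        have hZ0 : ν Z = 0 := by
          rw [hZdef, measure_toMeasurable]
          exact ae_iff.mp hψeq
        set Eset' := (K ×ˢ pb) ∩ ψ ⁻¹' L₀ with hEdef
        have hEm : MeasurableSet Eset' := (hKmeas.prod hpbm).inter (hψm hL₀meas)
        have hν1 : ν Eset' ≤ δ * C := by
          have h0 : ∫⁻ g, mN (Prod.mk g ⁻¹' Z) ∂μK = 0 := by
            rw [← Measure.prod_apply hZm]
            exact hZ0
          have h2 : ∀ᵐ g ∂μK, mN (Prod.mk g ⁻¹' Z) = 0 := by
            have h5 := (lintegral_eq_zero_iff (measurable_measure_prodMk_left hZm)).mp h0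
            filter_upwards [h5] with g hg
            simpa using hg
          have h1 : ∀ᵐ g ∂μK, g ∈ K := ae_restrict_mem hKmeas
          have hae2 : ∀ᵐ g ∂μK, mN (Prod.mk g ⁻¹' Eset') ≤ δ := by
            filter_upwards [h1, h2] with g hgK hZg
            have hsub : Prod.mk g ⁻¹' Eset' ⊆ S ε g ∪ Prod.mk g ⁻¹' Z := by
              rintro σ ⟨hmem, hσψ⟩
              by_cases hgs : φ (g, σ) = ψ (g, σ)
              · left
                have hFL : P.F ε g σ ∈ L₀ := by
                  show φ (g, σ) ∈ L₀
                  rw [hgs]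
                  exact hσψ
                exact (hS ε hεI hKG g hgK).2 ⟨hmem.2, hFL⟩
              · right
                exact subset_toMeasurable _ _ hgs
            calc mN (Prod.mk g ⁻¹' Eset') ≤ mN (S ε g) + mN (Prod.mk g ⁻¹' Z) :=
                  (measure_mono hsub).trans (measure_union_le _ _)
              _ ≤ δ + 0 := by rw [hZg]; exact add_le_add_left (hε₁ ε hεI hεlt₁ hKG g hgK) 0
              _ = δ := add_zero δ
          calc ν Eset' = ∫⁻ g, mN (Prod.mk g ⁻¹' Eset') ∂μK := Measure.prod_apply hEm
            _ ≤ ∫⁻ _, δ ∂μK := lintegral_mono_ae hae2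
            _ = δ * C := by rw [lintegral_const, hμKdef, Measure.restrict_apply_univ]
        have hsur : ∀ σ, σ ∈ pb → v ≤ 2 * μK {g | g ∈ K ∧ P.F ε g σ ∈ L₀} := by
          intro σ hσ
          have hder : ∀ g ∈ K, ∃ D : EuclideanSpace ℝ (Fin n) →L[ℝ] EuclideanSpace ℝ (Fin n),
              HasFDerivAt (fun x => P.F ε x σ) D g ∧
                ‖D - ContinuousLinearMap.id ℝ (EuclideanSpace ℝ (Fin n))‖ ≤ (c:ℝ) := by
            intro g hg
            obtain ⟨D, hD⟩ := P.F_diff ε hεI g (hKG hg) σ hσ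
            refine ⟨D, ?_, hε₂ ε hεI hεlt₂ g ⟨hg, hKG hg⟩ σ hσ D hD⟩
            simpa only [ContinuousLinearMap.id_apply, ContinuousLinearMap.comp_id] using hD
          choose! D hD1 hD2 using hder
          have happ : ApproximatesLinearOn (fun g => P.F ε g σ)
              (ContinuousLinearMap.id ℝ (EuclideanSpace ℝ (Fin n))) K c := by
            intro x hx y hy
            have hmv := Convex.norm_image_sub_le_of_norm_hasFDerivWithin_le
              (f := fun g => P.F ε g σ - g)
              (f' := fun g => D g - ContinuousLinearMap.id ℝ (EuclideanSpace ℝ (Fin n)))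
              (fun g hg => ((hD1 g hg).sub (hasFDerivAt_id g)).hasFDerivWithinAt)
              (fun g hg => hD2 g hg) (convex_closedBall _ _) hy hx
            have h3 : P.F ε x σ - P.F ε y σ -
                (ContinuousLinearMap.id ℝ (EuclideanSpace ℝ (Fin n))) (x - y)
                = (P.F ε x σ - x) - (P.F ε y σ - y) := by
              simp only [ContinuousLinearMap.id_apply]
              abel
            rw [h3]
            simpa using hmv
          have h0K : (0 : EuclideanSpace ℝ (Fin n)) ∈ K := by
            rw [hKdef]
            exact Metric.mem_closedBall_self (by linarith)
          have hzero : ‖P.F ε 0 σ - 0‖ ≤ 1 := hε₃ ε hεI hεlt₃ 0 ⟨h0K, hKG h0K⟩ σ hσ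
          have hsurj : SurjOn (fun g => P.F ε g σ) (Metric.closedBall 0 (r + 2))
              (Metric.closedBall ((fun g => P.F ε g σ) 0)
                ((((1:ℝ≥0):ℝ)⁻¹ - (c:ℝ)) * (r + 2))) :=
            happ.surjOn_closedBall_of_nonlinearRightInverse
              ⟨_root_.id, 1, fun y => by simp, fun y => by simp⟩
              (by linarith : (0:ℝ) ≤ r + 2) (by rw [hKdef])
          set T := {g | g ∈ K ∧ P.F ε g σ ∈ L₀} with hTdef
          have hball : L₀ ∩ Metric.closedBall 0 r ⊆ (fun g => P.F ε g σ) '' T := by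
            rintro y ⟨hyL, hyr⟩
            have hsub2 : Metric.closedBall (0:EuclideanSpace ℝ (Fin n)) r ⊆
                Metric.closedBall ((fun g => P.F ε g σ) 0)
                  ((((1:ℝ≥0):ℝ)⁻¹ - (c:ℝ)) * (r + 2)) := by
              apply Metric.closedBall_subset_closedBall'
              have h6 : dist (0:EuclideanSpace ℝ (Fin n)) (P.F ε 0 σ) ≤ 1 := by
                rw [dist_comm, dist_eq_norm]
                simpa using hzero
              simp only [NNReal.coe_one, inv_one]
              nlinarith [h6]
            obtain ⟨g, hgK, hgy⟩ := hsurj (hsub2 hyr)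
            have hgy' : P.F ε g σ = y := hgy
            exact ⟨g, ⟨hgK, by rw [hgy']; exact hyL⟩, hgy'⟩
          have hTK : T ⊆ K := fun g hg => hg.1
          have happT : ApproximatesLinearOn (fun g => P.F ε g σ)
              (ContinuousLinearMap.id ℝ (EuclideanSpace ℝ (Fin n))) T δ₀ :=
            ApproximatesLinearOn.mono_num hcδ₀ (happ.mono_set hTK)
          have himg := hPm T (fun g => P.F ε g σ) happT
          have h2c : ((2:ℝ≥0):ℝ≥0∞) = 2 := by norm_num
          rw [h2c] at himg
          have hμKT : volume T = μK T := by
            rw [hμKdef, Measure.restrict_apply' hKmeas, inter_eq_self_of_subset_left hTK]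
          calc v ≤ volume ((fun g => P.F ε g σ) '' T) := measure_mono hball
            _ ≤ 2 * volume T := himg
            _ = 2 * μK T := by rw [hμKT]
        have hae : ∀ᵐ σ ∂mN, v ≤ 2 * μK ((fun g => (g, σ)) ⁻¹' Eset') := by
          have h1 : ∀ᵐ σ ∂mN, σ ∈ pb := by
            rw [ae_iff]
            exact hpbc
          have h0 : ∫⁻ σ, μK ((fun g => (g, σ)) ⁻¹' Z) ∂mN = 0 := by
            rw [← Measure.prod_apply_symm hZm]
            exact hZ0
          have h2 : ∀ᵐ σ ∂mN, μK ((fun g => (g, σ)) ⁻¹' Z) = 0 := by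
            have h5 := (lintegral_eq_zero_iff (measurable_measure_prodMk_right hZm)).mp h0
            filter_upwards [h5] with σ hσ
            simpa using hσ
          filter_upwards [h1, h2] with σ hσ hZσ
          refine (hsur σ hσ).trans ?_
          have hsub : {g | g ∈ K ∧ P.F ε g σ ∈ L₀} ⊆
              ((fun g => (g, σ)) ⁻¹' Eset') ∪ ((fun g => (g, σ)) ⁻¹' Z) := by
            rintro g ⟨hgK, hgL⟩
            by_cases hgs : φ (g, σ) = ψ (g, σ)
            · left
              have hψL : ψ (g, σ) ∈ L₀ := by rw [← hgs]; exact hgL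
              exact ⟨⟨hgK, hσ⟩, hψL⟩
            · right
              exact subset_toMeasurable _ _ hgs
          have h7 : μK {g | g ∈ K ∧ P.F ε g σ ∈ L₀} ≤ μK ((fun g => (g, σ)) ⁻¹' Eset') := by
            calc μK {g | g ∈ K ∧ P.F ε g σ ∈ L₀}
                ≤ μK (((fun g => (g, σ)) ⁻¹' Eset') ∪ ((fun g => (g, σ)) ⁻¹' Z)) :=
                  measure_mono hsub
              _ ≤ μK ((fun g => (g, σ)) ⁻¹' Eset') + μK ((fun g => (g, σ)) ⁻¹' Z) :=
                  measure_union_le _ _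
              _ = μK ((fun g => (g, σ)) ⁻¹' Eset') := by rw [hZσ, add_zero]
          exact mul_le_mul_right h7 2
        have hfinal : v ≤ 2 * (δ * C) := by
          have e1 : v = ∫⁻ _, v ∂mN := by rw [lintegral_const, measure_univ, mul_one]
          rw [e1]
          calc ∫⁻ _, v ∂mN ≤ ∫⁻ σ, 2 * μK ((fun g => (g, σ)) ⁻¹' Eset') ∂mN :=
                lintegral_mono_ae hae
            _ = 2 * ∫⁻ σ, μK ((fun g => (g, σ)) ⁻¹' Eset') ∂mN :=
                lintegral_const_mul' _ _ (by norm_num)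
            _ = 2 * ν Eset' := by rw [hνdef, Measure.prod_apply_symm hEm]
            _ ≤ 2 * (δ * C) := mul_le_mul_right hν1 2
        have h10 : (2 * C + 1 : ℝ≥0∞) ≠ 0 := ne_of_gt (lt_of_lt_of_le zero_lt_one le_add_self)
        calc v ≤ 2 * (δ * C) := hfinal
          _ = (2 * C) * δ := by ring
          _ ≤ (2 * C + 1) * δ := mul_le_mul_left le_self_add δ
          _ = δ' := by
              rw [hδdef]
              exact ENNReal.mul_div_cancel h10 hCtop
      have h2 := bound (v / 2) (ENNReal.half_pos hv0)
      exact absurd h2 (not_le.mpr (ENNReal.half_lt_self hv0 hvfin))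
    exact measure_mono_null (inter_subset_inter_left _ hLsub) main
  have hcover : (Set.univ \ Gd) ⊆ ⋃ k : ℕ, (Set.univ \ Gd) ∩
      Metric.closedBall (0 : EuclideanSpace ℝ (Fin n)) (k : ℝ) := by
    intro x hx
    refine mem_iUnion.mpr ⟨⌈‖x‖⌉₊, hx, ?_⟩
    rw [Metric.mem_closedBall, dist_zero_right]
    exact Nat.le_ceil ‖x‖
  exact measure_mono_null hcover (measure_iUnion_null fun k => key k)

end
end

section
/- Let n ≥ 1 be an integer, q ≥ 1 an integer, and s ∈ (0,1). Let A be a real (2n)×(2n) matrix such that every eigenvalue λ ∈ ℂ of A satisfies |λ − exp(2πip/q)| ≥ s for every integer p with 0 ≤ p ≤ q−1. Then |det(I − A^q)| ≥ (min(2qs/5, 1/5))^{2n}. -/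
/-- A complex number `z` is an eigenvalue of the real square matrix `A` if `z` is a root of the
characteristic polynomial of `A`, viewed as a complex matrix. -/
def Matrix.IsEigenvalueC {ι : Type*} [Fintype ι] [DecidableEq ι]
    (A : Matrix ι ι ℝ) (z : ℂ) : Prop :=
  ((A.map (Complex.ofReal)).charpoly).IsRoot z

section Analytic

open Complex Real Finset

private lemma abs_sub_exp_sq' (r θ φ : ℝ) :
    ‖(r:ℂ) * Complex.exp ((φ:ℂ)*Complex.I) - Complex.exp ((θ:ℂ)*Complex.I)‖ ^ 2
      = (r - 1)^2 + 2*r*(1 - Real.cos (φ - θ)) := by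
  have h1 : Complex.exp ((θ:ℂ)*Complex.I) * Complex.exp (((φ-θ:ℝ):ℂ)*Complex.I)
      = Complex.exp ((φ:ℂ)*Complex.I) := by
    rw [← Complex.exp_add]; push_cast; ring_nf
  rw [show ((r:ℂ) * Complex.exp ((φ:ℂ)*Complex.I) - Complex.exp ((θ:ℂ)*Complex.I))
      = Complex.exp ((θ:ℂ)*Complex.I) * ((r:ℂ) * Complex.exp (((φ-θ:ℝ):ℂ)*Complex.I) - 1) by
    rw [mul_sub, mul_one, show Complex.exp ((θ:ℂ)*Complex.I) * ((r:ℂ) *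
      Complex.exp (((φ-θ:ℝ):ℂ)*Complex.I)) = (r:ℂ) * (Complex.exp ((θ:ℂ)*Complex.I) *
      Complex.exp (((φ-θ:ℝ):ℂ)*Complex.I)) from by ring, h1]]
  rw [norm_mul, Complex.norm_exp_ofReal_mul_I, one_mul, Complex.sq_norm]
  rw [Complex.exp_mul_I]
  rw [show ((r:ℂ) * ((Complex.cos ((φ-θ:ℝ):ℂ)) + (Complex.sin ((φ-θ:ℝ):ℂ)) * Complex.I) - 1)
      = ((r * Real.cos (φ-θ) - 1 : ℝ):ℂ) + ((r * Real.sin (φ-θ) : ℝ):ℂ) * Complex.I by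
    rw [← Complex.ofReal_cos, ← Complex.ofReal_sin]; push_cast; ring]
  rw [Complex.normSq_add_mul_I]
  linear_combination (r^2) * Real.sin_sq_add_cos_sq (φ - θ)

private lemma one_sub_cos' (x : ℝ) : 1 - Real.cos x = 2 * Real.sin (x/2) ^ 2 := by
  have h := Real.cos_two_mul (x/2)
  rw [show 2*(x/2) = x by ring] at h
  have h2 := Real.sin_sq_add_cos_sq (x/2)
  nlinarith

private lemma sin_lb' {x : ℝ} (hx : |x| ≤ π/2) : (2/π)^2 * x^2 ≤ Real.sin x ^ 2 := by
  rcases le_or_gt 0 x with h0 | h0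
  · have h := Real.mul_le_sin h0 (by rwa [_root_.abs_of_nonneg h0] at hx)
    have ha : 0 ≤ 2/π*x := by positivity
    calc (2/π)^2*x^2 = (2/π*x)^2 := by ring
    _ ≤ Real.sin x^2 := pow_le_pow_left₀ ha h 2
  · have hx' : 0 ≤ -x := by linarith
    have h := Real.mul_le_sin hx' (by rwa [_root_.abs_of_neg h0] at hx)
    rw [Real.sin_neg] at h
    have ha : 0 ≤ 2/π*(-x) := by positivity
    calc (2/π)^2*x^2 = (2/π*(-x))^2 := by ring
    _ ≤ (-Real.sin x)^2 := pow_le_pow_left₀ ha h 2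
    _ = Real.sin x^2 := by ring

private lemma geom_lb' (q : ℕ) (r : ℝ) (hr0 : 0 ≤ r) (hlb : 4/5 < r ^ q) :
    4/5 * q * |r - 1| ≤ |r ^ q - 1| := by
  have key : (r ^ q - 1) = (∑ i ∈ range q, r ^ i) * (r - 1) := (geom_sum_mul r q).symm
  rcases le_or_gt r 1 with h1 | h1
  · have hsum : (4/5 : ℝ) * q ≤ ∑ i ∈ range q, r ^ i := by
      calc (4/5 : ℝ) * q = ∑ _i ∈ range q, (4/5 : ℝ) := by
            rw [Finset.sum_const, card_range, nsmul_eq_mul]; ring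
      _ ≤ ∑ i ∈ range q, r ^ i := by
        apply Finset.sum_le_sum
        intro i hi
        exact le_trans hlb.le (pow_le_pow_of_le_one hr0 h1 (mem_range.mp hi).le)
    rw [abs_of_nonpos (by nlinarith [pow_le_one₀ hr0 h1 (n := q)] : r ^ q - 1 ≤ 0),
      abs_of_nonpos (by linarith : r - 1 ≤ 0)]
    nlinarith
  · have hsum : (q : ℝ) ≤ ∑ i ∈ range q, r ^ i := by
      calc (q:ℝ) = ∑ _i ∈ range q, (1:ℝ) := by simp
      _ ≤ ∑ i ∈ range q, r ^ i := Finset.sum_le_sum fun i _ => one_le_pow₀ h1.le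
    rw [_root_.abs_of_nonneg (by nlinarith [one_le_pow₀ h1.le (n := q)] : (0:ℝ) ≤ r ^ q - 1),
      _root_.abs_of_nonneg (by linarith : (0:ℝ) ≤ r - 1)]
    nlinarith

private lemma combine_ineq' (Q s u v A S : ℝ) (hs2 : s^2 ≤ u^2 + 6/5*v^2)
    (hA2 : 16/25*Q^2*u^2 ≤ A) (hB : 8/25*(Q*v)^2 ≤ S) (_hQ : 0 ≤ Q) :
    (2*Q*s/5)^2 ≤ A + S := by
  nlinarith [mul_le_mul_of_nonneg_left hs2 (show (0:ℝ) ≤ 4/25*Q^2 by positivity), sq_nonneg (Q*v),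
    sq_nonneg (Q*u)]

set_option maxHeartbeats 1000000 in
private lemma key_analytic' (q : ℕ) (hq : 1 ≤ q) (s : ℝ) (hs0 : 0 < s) (μ : ℂ)
    (h : ∀ p : ℕ, p ≤ q - 1 →
      s ≤ ‖μ - Complex.exp (2 * (Real.pi : ℂ) * Complex.I * (p : ℂ) / (q : ℂ))‖) :
    min (2 * (q : ℝ) * s / 5) (1 / 5) ≤ ‖μ ^ q - 1‖ := by
  by_cases h15 : (1:ℝ)/5 ≤ ‖μ ^ q - 1‖
  · exact le_trans (min_le_right _ _) h15
  push_neg at h15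
  refine le_trans (min_le_left _ _) ?_
  have hq0 : (0:ℝ) < q := by exact_mod_cast hq
  set r := ‖μ‖ with hrdef
  have hr0 : 0 ≤ r := norm_nonneg μ
  have hrq : |r ^ q - 1| ≤ ‖μ ^ q - 1‖ := by
    simpa [norm_pow] using abs_norm_sub_norm_le (μ ^ q) 1
  have hrqlt : |r ^ q - 1| < 1/5 := lt_of_le_of_lt hrq h15
  have hrq_lb : 4/5 < r ^ q := by have := abs_lt.mp hrqlt; linarith [this.1]
  have hrq_ub : r ^ q < 6/5 := by have := abs_lt.mp hrqlt; linarith [this.2]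
  have hrle : r ≤ 6/5 := by
    by_cases h1 : 1 ≤ r
    · exact le_trans (le_self_pow₀ h1 (by omega)) hrq_ub.le
    · push_neg at h1; linarith
  set φ := Complex.arg μ with hφdef
  set p0 : ℤ := round ((q : ℝ) * φ / (2 * π)) with hp0def
  set δ : ℝ := φ - 2 * π * p0 / q with hδdef
  clear_value δ
  have hδbound : |(q:ℝ) * δ / 2| ≤ π / 2 := by
    have h1 : (q:ℝ) * δ / 2 = π * ((q : ℝ) * φ / (2 * π) - p0) := by
      rw [hδdef]; field_simp
    rw [h1, abs_mul, abs_of_pos pi_pos]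
    have := abs_sub_round ((q : ℝ) * φ / (2 * π))
    nlinarith [pi_pos]
  have hμeq : μ = (r:ℂ) * Complex.exp ((φ:ℂ) * Complex.I) := (Complex.norm_mul_exp_arg_mul_I μ).symm
  have hpow : μ ^ q = ((r ^ q : ℝ):ℂ) * Complex.exp (((q * δ : ℝ):ℂ) * Complex.I) := by
    rw [hμeq, mul_pow, ← Complex.exp_nat_mul]
    push_cast
    have hqδ : (q:ℝ) * δ = q * φ - p0 * (2*π) := by
      rw [hδdef]; field_simp
    rw [show (q:ℂ) * (φ * Complex.I) = ((q * δ : ℝ):ℂ) * Complex.I + (p0:ℂ) * (2 * π * Complex.I) by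
      push_cast [hqδ]; ring]
    rw [Complex.exp_add, Complex.exp_int_mul_two_pi_mul_I]
    push_cast
    ring_nf
  -- the hypothesis at the nearest root of unity
  have hqZ : (q:ℤ) ≠ 0 := by omega
  set p : ℕ := (p0 % q).toNat with hpdef
  have hp0 : (p : ℤ) = p0 % q := Int.toNat_of_nonneg (Int.emod_nonneg p0 hqZ)
  have hplt : p ≤ q - 1 := by
    have := Int.emod_lt_of_pos p0 (by omega : (0:ℤ) < q)
    omega
  have hexp : Complex.exp (2 * (Real.pi : ℂ) * Complex.I * (p : ℂ) / (q : ℂ))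
      = Complex.exp (((2 * Real.pi * p0 / q : ℝ):ℂ) * Complex.I) := by
    have hk : (p : ℂ) = (p0 : ℂ) - (q : ℂ) * ((p0 / q : ℤ) : ℂ) := by
      have : (p : ℤ) = p0 - q * (p0 / q) := by rw [hp0, Int.emod_def]
      exact_mod_cast congrArg (Int.cast : ℤ → ℂ) this
    have hqC : (q : ℂ) ≠ 0 := by exact_mod_cast hqZ
    rw [show 2 * (Real.pi : ℂ) * Complex.I * (p : ℂ) / (q : ℂ)
        = ((2 * Real.pi * p0 / q : ℝ):ℂ) * Complex.I
          + (((-(p0 / q) : ℤ)) : ℂ) * (2 * Real.pi * Complex.I) by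
      push_cast [hk]; field_simp; ring]
    rw [Complex.exp_add, Complex.exp_int_mul_two_pi_mul_I, mul_one]
  have hsd : s ≤ ‖μ - Complex.exp (((2 * Real.pi * p0 / q : ℝ):ℂ) * Complex.I)‖ := by
    rw [← hexp]; exact h p hplt
  -- distance inequality squared
  have hs2 : s^2 ≤ (r - 1)^2 + 2*r*(1 - Real.cos δ) := by
    have h2 := pow_le_pow_left₀ hs0.le hsd 2
    rw [hμeq] at h2
    rw [abs_sub_exp_sq' r (2 * Real.pi * p0 / q) φ] at h2
    rwa [show φ - 2 * Real.pi * p0 / q = δ from hδdef.symm] at h2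
  have hs2' : s^2 ≤ (r - 1)^2 + (6/5)*δ^2 := by
    nlinarith [one_sub_cos' δ, Real.sin_sq_le_sq (x := δ/2), hr0, hrle, sq_nonneg δ]
  -- |μ^q - 1|^2 formula
  have hX2 : ‖μ ^ q - 1‖^2 = (r^q - 1)^2 + 4*(r^q)*Real.sin (q*δ/2)^2 := by
    rw [hpow, show (1:ℂ) = Complex.exp (((0:ℝ):ℂ) * Complex.I) by simp]
    rw [abs_sub_exp_sq' (r^q) 0 (q*δ), sub_zero, one_sub_cos' (q*δ)]
    ring_nf
  -- lower bounds
  have hA2 : (16/25) * (q:ℝ)^2 * (r-1)^2 ≤ (r^q - 1)^2 := by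
    have hA := geom_lb' q r hr0 hrq_lb
    have := pow_le_pow_left₀ (by positivity) hA 2
    rw [mul_pow, mul_pow, _root_.sq_abs, _root_.sq_abs] at this
    calc (16:ℝ)/25 * (q:ℝ)^2 * (r-1)^2 = (4/5)^2 * (q:ℝ)^2 * (r-1)^2 := by ring
    _ ≤ (r^q - 1)^2 := this
  have hπ2 : π^2 < 9.9225 := by nlinarith [Real.pi_lt_d2, Real.pi_pos]
  have hsin := sin_lb' hδbound
  have hsinsq : ((q:ℝ)*δ)^2 ≤ π^2 * Real.sin (q*δ/2)^2 := by
    have h2 := mul_le_mul_of_nonneg_left hsin (sq_nonneg π)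
    calc ((q:ℝ)*δ)^2 = π^2*((2/π)^2*((q:ℝ)*δ/2)^2) := by
          field_simp
    _ ≤ π^2 * Real.sin (q*δ/2)^2 := h2
  have hB : (8/25)*((q:ℝ)*δ)^2 ≤ 4*(r^q)*Real.sin (q*δ/2)^2 := by
    have hS : (0:ℝ) ≤ Real.sin (q*δ/2)^2 := sq_nonneg _
    have h3 := mul_le_mul_of_nonneg_right hπ2.le hS
    have h4 := mul_le_mul_of_nonneg_right hrq_lb.le hS
    norm_num at h3
    linarith [hsinsq, h3, h4, hS]
  -- combine
  have hmain : (2*(q:ℝ)*s/5)^2 ≤ ‖μ ^ q - 1‖^2 := by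
    rw [hX2]
    exact combine_ineq' q s (r-1) δ _ _ hs2' hA2 hB hq0.le
  have h1 : (0:ℝ) ≤ 2*(q:ℝ)*s/5 := by positivity
  have h2 : (0:ℝ) ≤ ‖μ ^ q - 1‖ := norm_nonneg _
  have h3 := Real.sqrt_le_sqrt hmain
  rwa [Real.sqrt_sq h1, Real.sqrt_sq h2] at h3

end Analytic

section Algebraic

open Polynomial Complex

private lemma eval_charpoly'' {m : ℕ} (M : Matrix (Fin m) (Fin m) ℂ) (r : ℂ) :
    M.charpoly.eval r = (Matrix.scalar (Fin m) r - M).det := by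
  rw [Matrix.charpoly, _root_.eval_det, Matrix.matPolyEquiv_charmatrix, eval_sub, eval_X, eval_C]

private lemma list_multiset_swap' (L : List ℂ) (R : Multiset ℂ) (f : ℂ → ℂ → ℝ) :
    (L.map (fun ζ => (R.map (fun μ => f ζ μ)).prod)).prod
      = (R.map (fun μ => (L.map (fun ζ => f ζ μ)).prod)).prod := by
  induction L with
  | nil => simp
  | cons a t ih =>
    simp only [List.map_cons, List.prod_cons, ih, ← Multiset.prod_map_mul]

private lemma pow_card_le_prod_real' (m : Multiset ℝ) (a : ℝ) (ha : 0 ≤ a)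
    (h : ∀ x ∈ m, a ≤ x) : a ^ Multiset.card m ≤ m.prod := by
  induction m using Multiset.induction with
  | empty => simp
  | cons x t ih =>
    rw [Multiset.card_cons, Multiset.prod_cons, pow_succ, mul_comm]
    have hx : a ≤ x := h x (Multiset.mem_cons_self x t)
    have ht := ih (fun y hy => h y (Multiset.mem_cons_of_mem hy))
    exact mul_le_mul hx ht (pow_nonneg ha _) (le_trans ha hx)

private lemma norm_multiset_prod' (m : Multiset ℂ) : ‖m.prod‖ = (m.map norm).prod :=
  (map_multiset_prod (normHom (α := ℂ)) m : _)

private lemma abs_det_eq_prod' {m q : ℕ} (hq : 1 ≤ q) (B : Matrix (Fin m) (Fin m) ℂ) :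
    ‖Matrix.det (1 - B ^ q)‖
      = ((B.charpoly.roots).map (fun μ => ‖μ ^ q - 1‖)).prod := by
  have hq0 : (q : ℕ) ≠ 0 := by omega
  have hmonic : ((X : ℂ[X]) ^ q - 1).Monic := by
    simpa using monic_X_pow_sub_C (1 : ℂ) hq0
  set L : List ℂ := ((X : ℂ[X]) ^ q - 1).roots.toList with hL
  have hfactM : ((X : ℂ[X]) ^ q - 1)
      = (((X : ℂ[X]) ^ q - 1).roots.map (fun ζ => X - C ζ)).prod :=
    ((IsAlgClosed.splits _).eq_prod_roots_of_monic hmonic)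
  have hfactL : ((X : ℂ[X]) ^ q - 1) = (L.map (fun ζ => X - C ζ)).prod := by
    rw [hfactM]
    rw [show ((X : ℂ[X]) ^ q - 1).roots = (L : Multiset ℂ) by rw [hL, Multiset.coe_toList]]
    simp [Multiset.map_coe]
  -- matrix factorization
  have hmatL : B ^ q - 1 = (L.map (fun ζ => B - Matrix.scalar (Fin m) ζ)).prod := by
    have h1 := congrArg (Polynomial.aeval B) hfactL
    rw [map_sub, map_pow, aeval_X, map_one, map_list_prod] at h1
    rw [h1, List.map_map]
    congr 1
    apply List.map_congr_left
    intro ζ _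
    simp [Matrix.scalar, Matrix.algebraMap_eq_diagonal]
  -- determinant
  have habs : ‖Matrix.det (1 - B ^ q)‖ = ‖Matrix.det (B ^ q - 1)‖ := by
    rw [show (1 - B ^ q) = -(B ^ q - 1) from (neg_sub _ _).symm, Matrix.det_neg, norm_mul, norm_pow]
    simp
  have hdet : ‖Matrix.det (B ^ q - 1)‖
      = (L.map (fun ζ => ‖B.charpoly.eval ζ‖)).prod := by
    have h2 := map_list_prod (Matrix.detMonoidHom (n := Fin m) (R := ℂ))
      (List.map (fun ζ => B - Matrix.scalar (Fin m) ζ) L)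
    simp only [Matrix.coe_detMonoidHom] at h2
    rw [hmatL, h2, List.norm_prod, List.map_map, List.map_map]
    congr 1
    apply List.map_congr_left
    intro ζ _
    simp only [Function.comp_apply]
    rw [show B - Matrix.scalar (Fin m) ζ = -(Matrix.scalar (Fin m) ζ - B) from (neg_sub _ _).symm,
      Matrix.det_neg, norm_mul, norm_pow, eval_charpoly'']
    simp
  -- charpoly eval in terms of roots
  set R : Multiset ℂ := B.charpoly.roots with hR
  have hcp : B.charpoly = (R.map (fun μ => X - C μ)).prod :=
    (IsAlgClosed.splits _).eq_prod_roots_of_monic (B.charpoly_monic)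
  have heval : ∀ ζ : ℂ, ‖B.charpoly.eval ζ‖
      = (R.map (fun μ => ‖ζ - μ‖)).prod := by
    intro ζ
    rw [hcp, eval_multiset_prod, norm_multiset_prod', Multiset.map_map,
      Multiset.map_map]
    congr 1
    apply Multiset.map_congr rfl
    intro μ _
    simp
  -- evaluate factorization at μ
  have hval : ∀ μ : ℂ, ‖μ ^ q - 1‖ = (L.map (fun ζ => ‖ζ - μ‖)).prod := by
    intro μ
    have h1 := congrArg (Polynomial.eval μ) hfactL
    rw [eval_sub, eval_pow, eval_X, eval_one, ← Polynomial.coe_evalRingHom, map_list_prod,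
      List.map_map] at h1
    rw [h1, List.norm_prod, List.map_map]
    congr 1
    apply List.map_congr_left
    intro ζ _
    simp [norm_sub_rev]
  rw [habs, hdet]
  calc (L.map (fun ζ => ‖B.charpoly.eval ζ‖)).prod
      = (L.map (fun ζ => (R.map (fun μ => ‖ζ - μ‖)).prod)).prod := by
        congr 1; exact List.map_congr_left (fun ζ _ => heval ζ)
    _ = (R.map (fun μ => (L.map (fun ζ => ‖ζ - μ‖)).prod)).prod :=
        list_multiset_swap' L R _
    _ = (R.map (fun μ => ‖μ ^ q - 1‖)).prod := by
        congr 1; exact Multiset.map_congr rfl (fun μ _ => (hval μ).symm)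

end Algebraic

open Polynomial in
/-- Let `n ≥ 1`, `q ≥ 1` be integers and `s ∈ (0,1)`. Let `A` be a real
`(2n)×(2n)` matrix such that every (complex) eigenvalue `λ` of `A` satisfies
`|λ − exp(2πip/q)| ≥ s` for every integer `0 ≤ p ≤ q−1`. Then
`|det(I − A^q)| ≥ (min(2qs/5, 1/5))^(2n)`. -/
theorem abs_det_one_sub_pow_ge
    (n q : ℕ) (hn : 1 ≤ n) (hq : 1 ≤ q) (s : ℝ) (hs : s ∈ Set.Ioo (0 : ℝ) 1)
    (A : Matrix (Fin (2 * n)) (Fin (2 * n)) ℝ)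
    (hA : ∀ lam : ℂ, A.IsEigenvalueC lam → ∀ p : ℕ, p ≤ q - 1 →
      s ≤ ‖lam - Complex.exp (2 * (Real.pi : ℂ) * Complex.I * (p : ℂ) / (q : ℂ))‖) :
    (min (2 * (q : ℝ) * s / 5) (1 / 5)) ^ (2 * n) ≤ |Matrix.det (1 - A ^ q)| := by
  obtain ⟨hs0, hs1⟩ := hs
  set B := A.map (Complex.ofReal) with hB
  -- relate the real determinant with the complex one
  have hmap : (Complex.ofRealHom.mapMatrix (1 - A ^ q)) = 1 - B ^ q := by
    rw [map_sub, map_one, map_pow]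
    rfl
  have hdet : ‖Matrix.det (1 - B ^ q)‖ = |Matrix.det (1 - A ^ q)| := by
    rw [← hmap, ← RingHom.map_det, Complex.ofRealHom_eq_coe, Complex.norm_real, Real.norm_eq_abs]
  rw [← hdet, abs_det_eq_prod' hq B]
  -- the number of roots of the characteristic polynomial
  have hcard : Multiset.card B.charpoly.roots = 2 * n := by
    rw [splits_iff_card_roots.mp (IsAlgClosed.splits _),
      Matrix.charpoly_natDegree_eq_dim B, Fintype.card_fin]
  have hmin0 : (0:ℝ) ≤ min (2 * (q : ℝ) * s / 5) (1 / 5) := by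
    apply le_min (by positivity) (by norm_num)
  have hbound : ∀ x ∈ (B.charpoly.roots).map (fun μ => ‖μ ^ q - 1‖),
      min (2 * (q : ℝ) * s / 5) (1 / 5) ≤ x := by
    intro x hx
    obtain ⟨μ, hμ, rfl⟩ := Multiset.mem_map.mp hx
    have hroot : B.charpoly.IsRoot μ :=
      (Polynomial.mem_roots (B.charpoly_monic.ne_zero)).mp hμ
    exact key_analytic' q hq s hs0 μ (hA μ hroot)
  have := pow_card_le_prod_real' _ _ hmin0 hbound
  rwa [Multiset.card_map, hcard] at this
end

section
/- Let q ≥ 1 be an integer and s ∈ (0,1). If λ ∈ ℂ satisfies |λ − exp(2πip/q)| ≥ s for every integer p with 0 ≤ p ≤ q−1, then |1 − λ^q| ≥ min(2qs/5, 1/5). -/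
/-!
Write `λ = r e^{iθ}` and let `ω` be the `q`-th root of unity nearest to `e^{iθ}`, so that
`λ = ω r e^{iψ}` with `|ψ| ≤ π/q` and `λ^q = r^q e^{iqψ}`. If `|1 - r^q| ≥ 1/5` we are done, since
`|1 - λ^q| ≥ |1 - r^q|`. Otherwise `r` and `r^q` are close to `1`, and comparing
`|re^{iψ} - 1|² = (r - 1)² + 4r sin²(ψ/2)` with `|r^q e^{iqψ} - 1|² = (r^q - 1)² + 4r^q sin²(qψ/2)`
term by term (Bernoulli's inequality for the radial part, Jordan's inequality `sin x ≥ 2x/π` for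
the angular part) gives `|1 - λ^q| ≥ (2q/5) |λ - ω| ≥ 2qs/5`.
-/

open Complex
open scoped Real

lemma norm_ofReal_mul_exp_mul_I_sub_one_sq (r α : ℝ) :
    ‖(r : ℂ) * exp (α * I) - 1‖ ^ 2 = (r - 1) ^ 2 + 4 * r * Real.sin (α / 2) ^ 2 := by
  have hcos := Real.cos_two_mul_eq_one_sub (α / 2)
  rw [show 2 * (α / 2) = α by ring] at hcos
  rw [Complex.sq_norm, Complex.normSq_apply]
  simp only [sub_re, sub_im, mul_re, mul_im, ofReal_re, ofReal_im, exp_ofReal_mul_I_re,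
    exp_ofReal_mul_I_im, one_re, one_im]
  linear_combination r ^ 2 * Real.sin_sq_add_cos_sq α - 2 * r * hcos

lemma mul_pow_mul_one_sub_le_one_sub_pow {r : ℝ} (hr : 0 ≤ r) (n : ℕ) :
    n * r ^ n * (1 - r) ≤ 1 - r ^ n := by
  induction n with
  | zero => simp
  | succ n ih =>
    rw [pow_succ]
    push_cast
    nlinarith [mul_nonneg (pow_nonneg hr n) (sq_nonneg (1 - r))]

lemma mul_abs_sub_one_le_abs_pow_sub_one {r c : ℝ} {n : ℕ} (hr : 0 ≤ r) (hc : c ≤ 1)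
    (hcr : c ≤ r ^ n) : c * n * |r - 1| ≤ |r ^ n - 1| := by
  rcases le_total r 1 with hr1 | hr1
  · rw [abs_of_nonpos (by linarith), abs_of_nonpos (by linarith [pow_le_one₀ hr hr1 (n := n)])]
    have := mul_pow_mul_one_sub_le_one_sub_pow hr n
    nlinarith [mul_nonneg n.cast_nonneg (sub_nonneg.2 hr1)]
  · rw [abs_of_nonneg (by linarith), abs_of_nonneg (by linarith [one_le_pow₀ hr1 (n := n)])]
    have bernoulli := one_add_mul_le_pow (show (-2 : ℝ) ≤ r - 1 by linarith) n
    rw [add_sub_cancel] at bernoulli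
    nlinarith [mul_nonneg n.cast_nonneg (sub_nonneg.2 hr1)]

lemma exp_two_pi_mul_I_mul_div_pow_self (p : ℕ) {n : ℕ} (hn : n ≠ 0) :
    exp (2 * π * I * p / n) ^ n = 1 := by
  have hn' : (n : ℂ) ≠ 0 := Nat.cast_ne_zero.2 hn
  rw [← exp_nat_mul, show (n : ℂ) * (2 * π * I * p / n) = p * (2 * π * I) by field_simp,
    exp_nat_mul_two_pi_mul_I]

lemma exists_exp_mul_I_eq_root_of_unity_mul {n : ℕ} (hn : n ≠ 0) (θ : ℝ) :
    ∃ p < n, ∃ ψ : ℝ, |ψ| ≤ π / n ∧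
      exp (θ * I) = exp (2 * π * I * p / n) * exp (ψ * I) := by
  have hn' : (0 : ℝ) < n := by positivity
  set k : ℤ := round (n * θ / (2 * π))
  have hmod_nonneg : 0 ≤ k % n := Int.emod_nonneg k (by omega)
  have hmod_lt : k % n < n := Int.emod_lt_of_pos k (by omega)
  refine ⟨(k % n).toNat, by omega, θ - 2 * π * k / n, ?_, ?_⟩
  · calc |θ - 2 * π * k / n| = |(n * θ / (2 * π) - k) * (2 * π / n)| := by
          congr 1; field_simp
      _ = |n * θ / (2 * π) - k| * (2 * π / n) := by
          rw [abs_mul, abs_of_pos (by positivity : 0 < 2 * π / n)]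
      _ ≤ 1 / 2 * (2 * π / n) := by gcongr; exact abs_sub_round _
      _ = π / n := by ring
  · have hroot : exp (2 * π * I * k / n) = exp (2 * π * I * ((k % n).toNat : ℕ) / n) := by
      refine exp_eq_exp_iff_exists_int.2 ⟨k / n, ?_⟩
      have hk_int : k = (k % n).toNat + n * (k / n) := by
        have := Int.mul_ediv_add_emod k n; omega
      have hk : (k : ℂ) = ((k % n).toNat : ℕ) + n * (k / n : ℤ) := by exact_mod_cast hk_int
      rw [hk]; field_simp
    rw [← hroot, ← exp_add]; congr 1; push_cast; ring

lemma sq_le_ten_mul_sin_half_sq {x : ℝ} (hx : |x| ≤ π) : x ^ 2 ≤ 10 * Real.sin (x / 2) ^ 2 := by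
  have hjordan : |x| ≤ π * |Real.sin (x / 2)| :=
    calc |x| = π * (2 / π * |x / 2|) := by
          rw [abs_div, abs_two]; field_simp
      _ ≤ π * |Real.sin (x / 2)| := by
          gcongr; exact Real.mul_abs_le_abs_sin (by rw [abs_div, abs_two]; linarith)
  have hπ : π ^ 2 ≤ 10 := by nlinarith [Real.pi_lt_d2, Real.pi_pos]
  calc x ^ 2 ≤ (π * |Real.sin (x / 2)|) ^ 2 := by
        rw [← sq_abs x]; gcongr
    _ = π ^ 2 * Real.sin (x / 2) ^ 2 := by rw [mul_pow, sq_abs]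
    _ ≤ 10 * Real.sin (x / 2) ^ 2 := by gcongr

lemma two_mul_div_five_mul_norm_sub_one_le_norm_pow_sub_one {n : ℕ} {r ψ : ℝ} (hr0 : 0 ≤ r)
    (hr : r ≤ 5 / 4) (hrn : 3 / 4 ≤ r ^ n) (hψ : |ψ| ≤ π / n) :
    2 * n / 5 * ‖(r : ℂ) * exp (ψ * I) - 1‖ ≤ ‖((r : ℂ) * exp (ψ * I)) ^ n - 1‖ := by
  have hpow : ((r : ℂ) * exp (ψ * I)) ^ n = ((r ^ n : ℝ) : ℂ) * exp ((n * ψ : ℝ) * I) := by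
    rw [mul_pow, ← exp_nat_mul]; push_cast; ring_nf
  have hradial : (4 / 25 : ℝ) * n ^ 2 * (r - 1) ^ 2 ≤ (r ^ n - 1) ^ 2 := by
    have h := pow_le_pow_left₀ (by positivity)
      (mul_abs_sub_one_le_abs_pow_sub_one hr0 (by norm_num) hrn) 2
    rw [mul_pow, sq_abs, sq_abs] at h
    nlinarith [sq_nonneg ((n : ℝ) * (r - 1))]
  have hangle_small : 4 * r * Real.sin (ψ / 2) ^ 2 ≤ 5 / 4 * ψ ^ 2 := by
    nlinarith [Real.sin_sq_le_sq (x := ψ / 2), sq_nonneg (Real.sin (ψ / 2))]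
  have hangle_large : (n * ψ) ^ 2 ≤ 10 * Real.sin (n * ψ / 2) ^ 2 := by
    refine sq_le_ten_mul_sin_half_sq ?_
    rcases eq_or_ne n 0 with rfl | hn
    · simp [Real.pi_pos.le]
    rw [abs_mul, Nat.abs_cast]
    calc n * |ψ| ≤ n * (π / n) := by gcongr
      _ = π := mul_div_cancel₀ _ (by positivity)
  refine le_of_pow_le_pow_left₀ two_ne_zero (norm_nonneg _) ?_
  rw [mul_pow, hpow, norm_ofReal_mul_exp_mul_I_sub_one_sq, norm_ofReal_mul_exp_mul_I_sub_one_sq]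
  nlinarith [mul_le_mul_of_nonneg_left hangle_small (sq_nonneg (n : ℝ)),
    mul_le_mul_of_nonneg_right hrn (sq_nonneg (Real.sin (n * ψ / 2)))]

theorem dist_one_pow_ge_of_dist_roots_of_unity_general
    (q : ℕ) (hq : 1 ≤ q) (s : ℝ) (lam : ℂ)
    (h : ∀ p : ℕ, p ≤ q - 1 →
      s ≤ ‖lam - Complex.exp (2 * (Real.pi : ℂ) * Complex.I * (p : ℂ) / (q : ℂ))‖) :
    min (2 * (q : ℝ) * s / 5) (1 / 5) ≤ ‖1 - lam ^ q‖ := by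
  set r := ‖lam‖
  have hradial : |1 - r ^ q| ≤ ‖1 - lam ^ q‖ := by
    simpa [r, norm_pow] using abs_norm_sub_norm_le (1 : ℂ) (lam ^ q)
  by_cases hfar : 1 / 5 ≤ |1 - r ^ q|
  · exact (min_le_right _ _).trans (hfar.trans hradial)
  obtain ⟨hrq_lo, hrq_hi⟩ := abs_lt.1 (not_le.1 hfar)
  have hr : r ≤ 5 / 4 := by
    rcases le_total r 1 with hr1 | hr1
    · linarith
    · linarith [le_self_pow₀ hr1 (by omega : q ≠ 0)]
  obtain ⟨p, hpq, ψ, hψ, hθ⟩ := exists_exp_mul_I_eq_root_of_unity_mul (n := q) (by omega) lam.arg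
  set ω := exp (2 * π * I * p / q)
  set u := (r : ℂ) * exp (ψ * I)
  have hωq : ω ^ q = 1 := exp_two_pi_mul_I_mul_div_pow_self p (by omega)
  have hlam : lam = ω * u := by
    nth_rw 1 [← norm_mul_exp_arg_mul_I lam]; rw [hθ]; ring
  have hdist : s ≤ ‖u - 1‖ := by
    have := h p (by omega)
    rwa [hlam, ← mul_sub_one, norm_mul, norm_eq_one_of_pow_eq_one hωq (by omega), one_mul] at this
  calc min (2 * (q : ℝ) * s / 5) (1 / 5) ≤ 2 * q / 5 * s := by
        rw [mul_div_right_comm]; exact min_le_left _ _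
    _ ≤ 2 * q / 5 * ‖u - 1‖ := by gcongr
    _ ≤ ‖u ^ q - 1‖ :=
      two_mul_div_five_mul_norm_sub_one_le_norm_pow_sub_one (norm_nonneg _) hr (by linarith) hψ
    _ = ‖1 - lam ^ q‖ := by rw [hlam, mul_pow ω, hωq, one_mul, norm_sub_rev]

/-- Let `q ≥ 1` be an integer and `s ∈ (0,1)`. If `λ ∈ ℂ` satisfies
`|λ − exp(2πip/q)| ≥ s` for every integer `p` with `0 ≤ p ≤ q−1`, then
`|1 − λ^q| ≥ min(2qs/5, 1/5)`. -/
theorem dist_one_pow_ge_of_dist_roots_of_unity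
    (q : ℕ) (hq : 1 ≤ q) (s : ℝ) (hs : s ∈ Set.Ioo (0 : ℝ) 1) (lam : ℂ)
    (h : ∀ p : ℕ, p ≤ q - 1 →
      s ≤ ‖lam - Complex.exp (2 * (Real.pi : ℂ) * Complex.I * (p : ℂ) / (q : ℂ))‖) :
    min (2 * (q : ℝ) * s / 5) (1 / 5) ≤ ‖1 - lam ^ q‖ :=
  dist_one_pow_ge_of_dist_roots_of_unity_general q hq s lam h
end

section
/- Let (X,d) be a metric space, φ a flow on X, and C₀ ≥ 1 a constant such that d(φ_t x, φ_t y) ≤ C₀^{|t|} d(x,y) for all t ∈ ℝ and x,y ∈ X. Let F > 0. Then there exists C ≥ 1, depending only on C₀ and F, such that the following holds: for all ρ ∈ X, α > 0, s,t ∈ ℝ, q ∈ ℤ and r ∈ ℝ with d(φ_t ρ, ρ) < α, d(φ_s ρ, ρ) < α, F/2 ≤ |s| < |t|, t = q·s + r and |r| < |s|, one has d(φ_r ρ, ρ) < C^{|t|} α. -/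
/-!
Writing `r = -q s + t`, the point `φ_r ρ` is `φ_{-qs}` applied to `φ_t ρ`, so it lies within
`C₀^{|qs|} α` of `φ_{-qs} ρ`, and `φ_{-qs} ρ` is reached from `ρ` by `|q|` steps of length `∓s`,
each transported by the flow at a cost of at most `C₀^{(|q|+1)|s|}`. Hence
`d(φ_r ρ, ρ) < (1 + |q|) C₀^{(|q|+1)|s|} α`. Division with remainder gives `|q| |s| < 2 |t|`, so
`(|q| + 1) |s| < 3 |t|` and `1 + |q| ≤ 1 + 4 |t| / F ≤ e^{4|t|/F}`: one may take `C = C₀³ e^{4/F}`.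
-/

open Real

section Flow

variable {X : Type*} [MetricSpace X] {φ : ℝ → X → X} {C₀ : ℝ}

theorem dist_flow_neg_le (hφ0 : ∀ x, φ 0 x = x)
    (hφadd : ∀ s t : ℝ, ∀ x, φ (s + t) x = φ s (φ t x))
    (hLip : ∀ (t : ℝ) (x y : X), dist (φ t x) (φ t y) ≤ C₀ ^ |t| * dist x y) (u : ℝ) (x : X) :
    dist (φ (-u) x) x ≤ C₀ ^ |u| * dist (φ u x) x := by
  have hinv : φ (-u) (φ u x) = x := by rw [← hφadd, neg_add_cancel, hφ0]
  calc dist (φ (-u) x) x = dist (φ (-u) x) (φ (-u) (φ u x)) := by rw [hinv]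
    _ ≤ C₀ ^ |-u| * dist x (φ u x) := hLip _ _ _
    _ = C₀ ^ |u| * dist (φ u x) x := by rw [abs_neg, dist_comm]

theorem dist_flow_nat_mul_le (hφ0 : ∀ x, φ 0 x = x)
    (hφadd : ∀ s t : ℝ, ∀ x, φ (s + t) x = φ s (φ t x)) (hC₀ : 1 ≤ C₀)
    (hLip : ∀ (t : ℝ) (x y : X), dist (φ t x) (φ t y) ≤ C₀ ^ |t| * dist x y)
    (n : ℕ) (u : ℝ) (x : X) :
    dist (φ (n * u) x) x ≤ n * C₀ ^ (n * |u|) * dist (φ u x) x := by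
  induction n with
  | zero => simp [hφ0]
  | succ n ih =>
    rw [Nat.cast_succ]
    have hmono : C₀ ^ (n * |u|) ≤ C₀ ^ ((n + 1) * |u|) :=
      rpow_le_rpow_of_exponent_le hC₀ (by gcongr; linarith)
    have hstep : dist (φ (n * u) (φ u x)) (φ (n * u) x) ≤ C₀ ^ (n * |u|) * dist (φ u x) x := by
      simpa [abs_mul] using hLip (n * u) (φ u x) x
    calc dist (φ ((n + 1) * u) x) x
        ≤ dist (φ (n * u) (φ u x)) (φ (n * u) x) + dist (φ (n * u) x) x := by
          rw [add_one_mul, hφadd]; exact dist_triangle _ _ _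
      _ ≤ (n + 1) * C₀ ^ (n * |u|) * dist (φ u x) x := by linarith
      _ ≤ (n + 1) * C₀ ^ ((n + 1) * |u|) * dist (φ u x) x := by gcongr

theorem dist_flow_int_mul_le (hφ0 : ∀ x, φ 0 x = x)
    (hφadd : ∀ s t : ℝ, ∀ x, φ (s + t) x = φ s (φ t x)) (hC₀ : 1 ≤ C₀)
    (hLip : ∀ (t : ℝ) (x y : X), dist (φ t x) (φ t y) ≤ C₀ ^ |t| * dist x y)
    (q : ℤ) (u : ℝ) (x : X) :
    dist (φ (q * u) x) x ≤ |(q : ℝ)| * C₀ ^ ((|(q : ℝ)| + 1) * |u|) * dist (φ u x) x := by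
  obtain ⟨n, rfl | rfl⟩ := Int.eq_nat_or_neg q
  · simp only [Int.cast_natCast, Nat.abs_cast]
    calc dist (φ (n * u) x) x ≤ n * C₀ ^ (n * |u|) * dist (φ u x) x :=
          dist_flow_nat_mul_le hφ0 hφadd hC₀ hLip n u x
      _ ≤ n * C₀ ^ ((n + 1) * |u|) * dist (φ u x) x := by
          gcongr; linarith
  · simp only [Int.cast_neg, Int.cast_natCast, abs_neg, Nat.abs_cast, neg_mul, ← mul_neg]
    calc dist (φ (n * -u) x) x ≤ n * C₀ ^ (n * |u|) * dist (φ (-u) x) x := by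
          simpa only [abs_neg] using dist_flow_nat_mul_le hφ0 hφadd hC₀ hLip n (-u) x
      _ ≤ n * C₀ ^ (n * |u|) * (C₀ ^ |u| * dist (φ u x) x) := by
          gcongr; exact dist_flow_neg_le hφ0 hφadd hLip u x
      _ = n * C₀ ^ ((n + 1) * |u|) * dist (φ u x) x := by
          rw [add_one_mul, rpow_add (by linarith)]; ring

theorem dist_flow_of_eq_int_mul_add_lt (hφ0 : ∀ x, φ 0 x = x)
    (hφadd : ∀ s t : ℝ, ∀ x, φ (s + t) x = φ s (φ t x)) (hC₀ : 1 ≤ C₀)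
    (hLip : ∀ (t : ℝ) (x y : X), dist (φ t x) (φ t y) ≤ C₀ ^ |t| * dist x y)
    {x : X} {α s t r : ℝ} {q : ℤ} (ht : dist (φ t x) x < α) (hs : dist (φ s x) x ≤ α)
    (htr : t = q * s + r) :
    dist (φ r x) x < (1 + |(q : ℝ)|) * C₀ ^ ((|(q : ℝ)| + 1) * |s|) * α := by
  set L := C₀ ^ ((|(q : ℝ)| + 1) * |s|)
  have hshift : C₀ ^ |-q * s| ≤ L := by
    rw [abs_mul, abs_neg]
    exact rpow_le_rpow_of_exponent_le hC₀ (by nlinarith [abs_nonneg s])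
  have hback : dist (φ (-q * s) x) x ≤ |(q : ℝ)| * L * α := by
    have hsteps := dist_flow_int_mul_le hφ0 hφadd hC₀ hLip (-q) s x
    push_cast at hsteps
    rw [abs_neg] at hsteps
    exact hsteps.trans (by gcongr)
  calc dist (φ r x) x
      ≤ dist (φ (-q * s) (φ t x)) (φ (-q * s) x) + dist (φ (-q * s) x) x := by
        rw [← hφadd, show -q * s + t = r by rw [htr]; ring]; exact dist_triangle _ _ _
    _ ≤ C₀ ^ |-q * s| * dist (φ t x) x + |(q : ℝ)| * L * α := add_le_add (hLip _ _ _) hback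
    _ < L * α + |(q : ℝ)| * L * α := by
        gcongr ?_ + _
        exact (mul_le_mul_of_nonneg_right hshift dist_nonneg).trans_lt
          (mul_lt_mul_of_pos_left ht (by positivity))
    _ = (1 + |(q : ℝ)|) * L * α := by ring

end Flow

theorem abs_intCast_mul_lt_two_mul {q : ℤ} {s t r : ℝ} (htr : t = q * s + r) (hr : |r| < |s|)
    (hst : |s| < |t|) : |(q : ℝ)| * |s| < 2 * |t| := by
  rw [← abs_mul, show (q : ℝ) * s = t - r by linarith]
  linarith [abs_sub t r]

theorem one_add_mul_rpow_le_rpow {C₀ F Q s t : ℝ} (hC₀ : 1 ≤ C₀) (hF : 0 < F) (hQ : 0 ≤ Q)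
    (hFs : F / 2 ≤ |s|) (hst : |s| < |t|) (hQs : Q * |s| < 2 * |t|) :
    (1 + Q) * C₀ ^ ((Q + 1) * |s|) ≤ (C₀ ^ 3 * exp (4 / F)) ^ |t| := by
  have hQF : Q ≤ 4 / F * |t| := by
    rw [div_mul_eq_mul_div, le_div_iff₀ hF]
    nlinarith [mul_le_mul_of_nonneg_left hFs hQ]
  rw [mul_rpow (by positivity) (exp_pos _).le, ← rpow_natCast_mul (by linarith), ← exp_mul,
    mul_comm]
  gcongr ?_ * ?_
  · exact rpow_le_rpow_of_exponent_le hC₀ (by push_cast; nlinarith)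
  · linarith [add_one_le_exp (4 / F * |t|)]

/-- Let `(X,d)` be a metric space, `φ` a flow on `X`, and `C₀ ≥ 1` with
`d(φ_t x, φ_t y) ≤ C₀^{|t|} d(x,y)` for all `t, x, y`. Let `F > 0`. Then there is `C ≥ 1`
(depending only on `C₀` and `F`) such that: whenever `d(φ_t ρ, ρ) < α`, `d(φ_s ρ, ρ) < α`,
`F/2 ≤ |s| < |t|`, `t = q·s + r` with `q ∈ ℤ` and `|r| < |s|`, one has
`d(φ_r ρ, ρ) < C^{|t|} α`. -/
theorem flow_division_lemma {X : Type*} [MetricSpace X]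
    (φ : ℝ → X → X) (hφ0 : ∀ x, φ 0 x = x) (hφadd : ∀ s t : ℝ, ∀ x, φ (s + t) x = φ s (φ t x))
    (C₀ : ℝ) (hC₀ : 1 ≤ C₀)
    (hLip : ∀ (t : ℝ) (x y : X), dist (φ t x) (φ t y) ≤ C₀ ^ |t| * dist x y)
    (F : ℝ) (hF : 0 < F) :
    ∃ C : ℝ, 1 ≤ C ∧
      ∀ (ρ : X) (α s t r : ℝ) (q : ℤ),
        dist (φ t ρ) ρ < α → dist (φ s ρ) ρ < α →
        F / 2 ≤ |s| → |s| < |t| → t = (q : ℝ) * s + r → |r| < |s| →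
        dist (φ r ρ) ρ < C ^ |t| * α := by
  refine ⟨C₀ ^ 3 * exp (4 / F),
    one_le_mul_of_one_le_of_one_le (one_le_pow₀ hC₀) (one_le_exp (by positivity)), ?_⟩
  intro ρ α s t r q ht hs hFs hst htr hr
  have hα : 0 < α := dist_nonneg.trans_lt ht
  calc dist (φ r ρ) ρ < (1 + |(q : ℝ)|) * C₀ ^ ((|(q : ℝ)| + 1) * |s|) * α :=
        dist_flow_of_eq_int_mul_add_lt hφ0 hφadd hC₀ hLip ht hs.le htr
    _ ≤ (C₀ ^ 3 * exp (4 / F)) ^ |t| * α := by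
        gcongr
        exact one_add_mul_rpow_le_rpow hC₀ hF (abs_nonneg _) hFs hst
          (abs_intCast_mul_lt_two_mul htr hr hst)
end

section
/- Let A : ℝ → ℝ be twice differentiable with A(0) = 0, A'(t) > 0 and A''(t) ≥ 0 for all t ≥ 0, and A(t) → ∞ as t → ∞. Fix γ > 0 and define T : (0,1) → (0,∞) by letting T(R) be the unique t ≥ 0 with A(t) = γ·log(1/R) (equivalently, T(R) = f^{−1}(R^γ) where f(t) = e^{−A(t)}). Then T is a sub-logarithmic resolution function: T is continuous and decreasing, T is differentiable on (0,1), and T'(R)/T(R) ≥ −1/(R·log(1/R)) for all R ∈ (0,1). -/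
/-- Let `A : ℝ → ℝ` be twice differentiable with `A(0) = 0`, `A' > 0` and
`A'' ≥ 0` on `[0,∞)`, and `A(t) → ∞` as `t → ∞`. Fix `γ > 0` and let `T : (0,1) → (0,∞)` be
defined by `A(T(R)) = γ log(1/R)` (with `T(R) ≥ 0`). Then `T` is a sub-logarithmic resolution
function: it is positive, continuous and decreasing on `(0,1)`, differentiable on `(0,1)`, and
`T'(R)/T(R) ≥ −1/(R log(1/R))` for all `R ∈ (0,1)`. -/
theorem sublogarithmic_resolution_function
    (A : ℝ → ℝ) (hA₁ : Differentiable ℝ A) (hA₂ : Differentiable ℝ (deriv A))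
    (hA0 : A 0 = 0)
    (hA'pos : ∀ t : ℝ, 0 ≤ t → 0 < deriv A t)
    (hA''nonneg : ∀ t : ℝ, 0 ≤ t → 0 ≤ deriv (deriv A) t)
    (hAtop : Filter.Tendsto A Filter.atTop Filter.atTop)
    (γ : ℝ) (hγ : 0 < γ)
    (T : ℝ → ℝ)
    (hT : ∀ R ∈ Set.Ioo (0 : ℝ) 1, 0 ≤ T R ∧ A (T R) = γ * Real.log (1 / R)) :
    (∀ R ∈ Set.Ioo (0 : ℝ) 1, 0 < T R) ∧
    ContinuousOn T (Set.Ioo 0 1) ∧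
    AntitoneOn T (Set.Ioo 0 1) ∧
    ∀ R ∈ Set.Ioo (0 : ℝ) 1,
      DifferentiableAt ℝ T R ∧ -(1 / (R * Real.log (1 / R))) ≤ deriv T R / T R := by
  -- A is strictly monotone on [0,∞)
  have hAmono : StrictMonoOn A (Set.Ici 0) := by
    apply strictMonoOn_of_deriv_pos (convex_Ici 0) hA₁.continuous.continuousOn
    intro x hx
    rw [interior_Ici] at hx
    exact hA'pos x hx.le
  -- A' is monotone on [0,∞)
  have hA'mono : MonotoneOn (deriv A) (Set.Ici 0) := by
    apply monotoneOn_of_deriv_nonneg (convex_Ici 0) hA₂.continuous.continuousOn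
      hA₂.differentiableOn
    intro x hx
    rw [interior_Ici] at hx
    exact hA''nonneg x hx.le
  have hlogpos : ∀ R ∈ Set.Ioo (0:ℝ) 1, 0 < Real.log (1/R) := by
    intro R hR
    exact Real.log_pos (one_lt_one_div hR.1 hR.2)
  -- positivity of T
  have hTpos : ∀ R ∈ Set.Ioo (0:ℝ) 1, 0 < T R := by
    intro R hR
    obtain ⟨h0, hAeq⟩ := hT R hR
    rcases h0.lt_or_eq with h | h
    · exact h
    · exfalso
      rw [← h, hA0] at hAeq
      have := mul_pos hγ (hlogpos R hR)
      linarith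
  -- strict antitonicity
  have hanti : StrictAntiOn T (Set.Ioo 0 1) := by
    intro R1 h1 R2 h2 h12
    by_contra hle
    push_neg at hle
    have hm : A (T R1) ≤ A (T R2) :=
      hAmono.monotoneOn (hT R1 h1).1 (hT R2 h2).1 hle
    rw [(hT R1 h1).2, (hT R2 h2).2] at hm
    have hlog : Real.log (1/R2) < Real.log (1/R1) := by
      apply Real.log_lt_log (one_div_pos.mpr h2.1)
      exact one_div_lt_one_div_of_lt h1.1 h12
    nlinarith
  -- the image of T is (0, ∞)
  have himg : T '' (Set.Ioo 0 1) = Set.Ioi 0 := by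
    apply Set.Subset.antisymm
    · rintro _ ⟨R, hR, rfl⟩
      exact hTpos R hR
    · rintro t (ht : 0 < t)
      have hAt : 0 < A t := by
        have := hAmono (Set.mem_Ici.mpr le_rfl) ht.le ht
        rwa [hA0] at this
      refine ⟨Real.exp (-(A t)/γ), ⟨Real.exp_pos _, ?_⟩, ?_⟩
      · rw [Real.exp_lt_one_iff]
        exact div_neg_of_neg_of_pos (by linarith) hγ
      · set R := Real.exp (-(A t)/γ) with hRdef
        have hRpos : 0 < R := Real.exp_pos _
        have hR1 : R < 1 := by
          rw [hRdef, Real.exp_lt_one_iff]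
          exact div_neg_of_neg_of_pos (by linarith) hγ
        have hRmem : R ∈ Set.Ioo (0:ℝ) 1 := ⟨hRpos, hR1⟩
        have hlogR : Real.log (1/R) = A t / γ := by
          rw [one_div, Real.log_inv, hRdef, Real.log_exp]
          ring
        have hAeq : A (T R) = A t := by
          rw [(hT R hRmem).2, hlogR]
          field_simp
        exact hAmono.injOn (hT R hRmem).1 ht.le hAeq
  -- continuity
  have hcont : ∀ R ∈ Set.Ioo (0:ℝ) 1, ContinuousAt T R := by
    intro R hR
    have hmono' : StrictMonoOn (fun x => -T x) (Set.Ioo 0 1) :=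
      fun x hx y hy hxy => neg_lt_neg (hanti hx hy hxy)
    have himg' : (fun x => -T x) '' (Set.Ioo 0 1) = Set.Iio 0 := by
      have : (fun x => -T x) '' (Set.Ioo 0 1) = Neg.neg '' (T '' (Set.Ioo 0 1)) := by
        rw [Set.image_image]
      rw [this, himg]
      ext x
      simp only [Set.mem_image, Set.mem_Ioi, Set.mem_Iio]
      constructor
      · rintro ⟨y, hy, rfl⟩; linarith
      · intro hx; exact ⟨-x, by linarith, by ring⟩
    have h1 : ContinuousAt (fun x => -T x) R := by
      apply hmono'.continuousAt_of_image_mem_nhds (isOpen_Ioo.mem_nhds hR)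
      rw [himg']
      exact isOpen_Iio.mem_nhds (by simpa using hTpos R hR)
    have := h1.neg
    simpa only [Pi.neg_def, neg_neg] using this
  -- differentiability and derivative formula
  have hderiv : ∀ R ∈ Set.Ioo (0:ℝ) 1,
      HasDerivAt T (R * (-(deriv A (T R))/γ))⁻¹ R := by
    intro R hR
    set t₀ := T R with ht₀def
    have ht₀pos : 0 < t₀ := hTpos R hR
    have haeq : A t₀ = γ * Real.log (1/R) := (hT R hR).2
    have hexp : Real.exp (-(A t₀)/γ) = R := by
      rw [haeq, one_div, Real.log_inv]
      rw [show -(γ * -Real.log R)/γ = Real.log R by field_simp]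
      exact Real.exp_log hR.1
    have hf : HasDerivAt (fun t => Real.exp (-(A t)/γ))
        (Real.exp (-(A t₀)/γ) * (-(deriv A t₀)/γ)) t₀ :=
      (((hA₁ t₀).hasDerivAt.neg).div_const γ).exp
    rw [hexp] at hf
    have hf' : R * (-(deriv A t₀)/γ) ≠ 0 := by
      have := hA'pos t₀ ht₀pos.le
      have : -(deriv A t₀)/γ < 0 := by
        apply div_neg_of_neg_of_pos (by linarith) hγ
      exact ne_of_lt (mul_neg_of_pos_of_neg hR.1 this)
    have hfg : ∀ᶠ y in nhds R, Real.exp (-(A (T y))/γ) = y := by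
      filter_upwards [isOpen_Ioo.mem_nhds hR] with y hy
      rw [(hT y hy).2, one_div, Real.log_inv]
      rw [show -(γ * -Real.log y)/γ = Real.log y by field_simp]
      exact Real.exp_log hy.1
    exact HasDerivAt.of_local_left_inverse (hcont R hR) hf hf' hfg
  refine ⟨hTpos, fun R hR => (hcont R hR).continuousWithinAt, hanti.antitoneOn, ?_⟩
  intro R hR
  have hd := hderiv R hR
  refine ⟨hd.differentiableAt, ?_⟩
  rw [hd.deriv]
  set t₀ := T R with ht₀def
  have ht₀pos : 0 < t₀ := hTpos R hR
  set a := deriv A t₀ with hadef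
  have hapos : 0 < a := hA'pos t₀ ht₀pos.le
  set L := Real.log (1/R) with hLdef
  have hLpos : 0 < L := hlogpos R hR
  -- key convexity estimate: A t₀ ≤ t₀ * a
  have hkey : γ * L ≤ t₀ * a := by
    obtain ⟨c, hc, hcd⟩ := exists_deriv_eq_slope A ht₀pos
      hA₁.continuous.continuousOn hA₁.differentiableOn
    have hca : deriv A c ≤ a :=
      hA'mono (le_of_lt hc.1) ht₀pos.le hc.2.le
    rw [hA0, sub_zero, sub_zero] at hcd
    have : A t₀ = t₀ * deriv A c := by
      field_simp at hcd
      linarith [hcd]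
    rw [(hT R hR).2] at this
    nlinarith
  have hRpos : 0 < R := hR.1
  have hrhs : (R * (-a/γ))⁻¹ / t₀ = -(γ / (R * a * t₀)) := by
    field_simp
  rw [hrhs, neg_le_neg_iff, div_le_div_iff₀ (by positivity) (by positivity)]
  nlinarith
end

section
/- Let n ≥ 1 be an integer and M > 0. There exist C > 0 and R₀ > 0, depending only on n and M, such that the following holds. Let L : ℝ → M(n,ℝ) satisfy ‖L(t)‖ ≤ M for all t ∈ ℝ, and let u : ℝ → ℝⁿ be differentiable with u'(t) = −L(t)ᵀ u(t) for all t ∈ ℝ. Let χ : ℝ → ℝ be smooth with support contained in (−2,2), with 0 ≤ χ ≤ 1 and ∫_ℝ χ = 1. Then for every t⋆ ∈ ℝ, every R with 0 < R < R₀, and every T ∈ ℝ, one has ‖u(T)‖² ≤ C e^{C|T − t⋆|} Σ_{i=1}^{n} ( ∫_ℝ u_i(t) · R^{−1} χ((t − t⋆)/R) dt )². -/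
set_option synthInstance.maxHeartbeats 1000000
set_option maxHeartbeats 1000000

open MeasureTheory

/-- The operator norm of a real square matrix with respect to the Euclidean norm. -/
noncomputable def Matrix.euclideanOpNorm {ι : Type*} [Fintype ι] [DecidableEq ι]
    (A : Matrix ι ι ℝ) : ℝ :=
  ‖(Matrix.toEuclideanCLM (𝕜 := ℝ) A : EuclideanSpace ℝ ι →L[ℝ] EuclideanSpace ℝ ι)‖

lemma gron_aux {E : Type*} [NormedAddCommGroup E] [NormedSpace ℝ E]
    {M : ℝ} {u d : ℝ → E}
    (hu : ∀ t, HasDerivAt u (d t) t) (hd : ∀ t, ‖d t‖ ≤ M * ‖u t‖)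
    {a b : ℝ} (hab : a ≤ b) : ‖u b‖ ≤ Real.exp (M * (b - a)) * ‖u a‖ := by
  have h := norm_le_gronwallBound_of_norm_deriv_right_le
    (f := u) (f' := d) (δ := ‖u a‖) (K := M) (ε := 0) (a := a) (b := b)
    (fun x _ => ((hu x).continuousAt).continuousWithinAt)
    (fun x _ => (hu x).hasDerivWithinAt)
    le_rfl (fun x _ => by simpa using hd x) b ⟨hab, le_rfl⟩
  rwa [gronwallBound_ε0, mul_comm ‖u a‖] at h

lemma gron {E : Type*} [NormedAddCommGroup E] [NormedSpace ℝ E]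
    {M : ℝ} {u d : ℝ → E}
    (hu : ∀ t, HasDerivAt u (d t) t) (hd : ∀ t, ‖d t‖ ≤ M * ‖u t‖)
    (a b : ℝ) : ‖u b‖ ≤ Real.exp (M * |b - a|) * ‖u a‖ := by
  rcases le_total a b with hab | hba
  · rw [abs_of_nonneg (by linarith)]; exact gron_aux hu hd hab
  · rw [abs_of_nonpos (by linarith)]
    set g : ℝ → E := fun x => u (a + b - x) with hg
    have hgd : ∀ x, HasDerivAt g ((-1 : ℝ) • d (a + b - x)) x := fun x =>
      (hu (a + b - x)).scomp x (((hasDerivAt_id x).const_sub (a + b)))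
    have hgb : ∀ x, ‖(-1 : ℝ) • d (a + b - x)‖ ≤ M * ‖g x‖ := by
      intro x; simpa using hd (a + b - x)
    have := gron_aux hgd hgb hba
    simpa [hg, neg_sub] using this

lemma transpose_norm {ι : Type*} [Fintype ι] [DecidableEq ι] (A : Matrix ι ι ℝ) :
    ‖(Matrix.toEuclideanCLM (𝕜 := ℝ) A.transpose : EuclideanSpace ℝ ι →L[ℝ] EuclideanSpace ℝ ι)‖
      = A.euclideanOpNorm := by
  have h1 : A.transpose = star A := by
    rw [Matrix.star_eq_conjTranspose, Matrix.conjTranspose_eq_transpose_of_trivial]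
  rw [h1, map_star, Matrix.euclideanOpNorm, ContinuousLinearMap.star_eq_adjoint]
  exact ContinuousLinearMap.adjoint.norm_map _

lemma coord_abs_le {n : ℕ} (x : EuclideanSpace ℝ (Fin n)) (i : Fin n) : |x i| ≤ ‖x‖ := by
  rw [EuclideanSpace.norm_eq]
  have h1 : |x i| = Real.sqrt (‖x i‖ ^ 2) := by
    rw [Real.norm_eq_abs, Real.sqrt_sq_eq_abs, abs_abs]
  rw [h1]
  apply Real.sqrt_le_sqrt
  exact Finset.single_le_sum (fun j _ => sq_nonneg ‖x j‖) (Finset.mem_univ i)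

lemma euclid_norm_sq {n : ℕ} (x : EuclideanSpace ℝ (Fin n)) :
    ‖x‖ ^ 2 = ∑ i, (x i) ^ 2 := by
  rw [EuclideanSpace.norm_eq, Real.sq_sqrt (Finset.sum_nonneg fun j _ => sq_nonneg ‖x j‖)]
  simp [Real.norm_eq_abs, sq_abs]

/-- **observability.** Let `n ≥ 1` and `M > 0`. There are `C > 0` and `R₀ > 0`,
depending only on `n` and `M`, such that: if `‖L(t)‖ ≤ M` for all `t`, `u' = −L(t)ᵀ u`,
`χ ∈ C_c^∞((−2,2);[0,1])` with `∫χ = 1`, then for every `t⋆ ∈ ℝ`, `0 < R < R₀` and `T ∈ ℝ`,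
`‖u(T)‖² ≤ C e^{C|T − t⋆|} Σᵢ (∫ uᵢ(t) R⁻¹ χ((t−t⋆)/R) dt)²`. -/
theorem ode_observability
    (n : ℕ) (hn : 1 ≤ n) (M : ℝ) (hM : 0 < M) :
    ∃ C : ℝ, 0 < C ∧ ∃ R₀ : ℝ, 0 < R₀ ∧
      ∀ L : ℝ → Matrix (Fin n) (Fin n) ℝ, (∀ t : ℝ, Matrix.euclideanOpNorm (L t) ≤ M) →
      ∀ u : ℝ → EuclideanSpace ℝ (Fin n),
        (∀ t : ℝ, HasDerivAt u (-(Matrix.toEuclideanCLM (𝕜 := ℝ) (L t).transpose (u t))) t) →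
      ∀ χ : ℝ → ℝ, (∀ k : ℕ, ContDiff ℝ k χ) → Function.support χ ⊆ Set.Ioo (-2 : ℝ) 2 →
        (∀ x, 0 ≤ χ x) → (∀ x, χ x ≤ 1) → (∫ x, χ x) = 1 →
      ∀ (tstar R T : ℝ), 0 < R → R < R₀ →
        ‖u T‖ ^ 2 ≤ C * Real.exp (C * |T - tstar|) *
          ∑ i : Fin n, (∫ t, u t i * (R⁻¹ * χ ((t - tstar) / R))) ^ 2 := by
  have hn' : (0:ℝ) < n := by exact_mod_cast hn
  set E2 : ℝ := Real.exp (2 * M) with hE2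
  have hE2pos : 0 < E2 := Real.exp_pos _
  set D : ℝ := 4 * n * M * E2 with hD
  have hDpos : 0 < D := by positivity
  refine ⟨2 * M + 4, by linarith, min 1 (1 / D), lt_min one_pos (by positivity), ?_⟩
  intro L hL u hu χ hχsm hχsupp hχ0 _hχ1 hχint tstar R T hR hRlt
  set C : ℝ := 2 * M + 4 with hC
  have hR1 : R ≤ 1 := le_of_lt (lt_of_lt_of_le hRlt (min_le_left _ _))
  have hRD : R * D ≤ 1 := by
    have h2 : R < 1 / D := lt_of_lt_of_le hRlt (min_le_right _ _)
    rw [lt_div_iff₀ hDpos] at h2; linarith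
  -- derivative bound
  set d : ℝ → EuclideanSpace ℝ (Fin n) :=
    fun t => -(Matrix.toEuclideanCLM (𝕜 := ℝ) (L t).transpose (u t)) with hd_def
  have hd : ∀ t, ‖d t‖ ≤ M * ‖u t‖ := by
    intro t
    rw [hd_def, norm_neg]
    calc ‖Matrix.toEuclideanCLM (𝕜 := ℝ) (L t).transpose (u t)‖
        ≤ ‖(Matrix.toEuclideanCLM (𝕜 := ℝ) (L t).transpose :
            EuclideanSpace ℝ (Fin n) →L[ℝ] EuclideanSpace ℝ (Fin n))‖ * ‖u t‖ :=
          ContinuousLinearMap.le_opNorm _ _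
      _ ≤ M * ‖u t‖ := by
          rw [transpose_norm]
          exact mul_le_mul_of_nonneg_right (hL t) (norm_nonneg _)
  have hgron := gron hu hd
  have hudiff : Differentiable ℝ u := fun t => (hu t).differentiableAt
  have hucont : Continuous u := hudiff.continuous
  set a : ℝ := ‖u tstar‖ with ha
  have ha0 : 0 ≤ a := norm_nonneg _
  -- the bump
  set w : ℝ → ℝ := fun t => R⁻¹ * χ ((t - tstar) / R) with hw
  have hχcont : Continuous χ := (hχsm 0).continuous
  have hwcont : Continuous w := by
    apply continuous_const.mul
    exact hχcont.comp (by continuity)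
  have hw0 : ∀ t, 0 ≤ w t := fun t => mul_nonneg (by positivity) (hχ0 _)
  have hwz : ∀ t, t ∉ Set.Icc (tstar - 2 * R) (tstar + 2 * R) → w t = 0 := by
    intro t ht
    rw [hw]
    by_contra h
    have hne : χ ((t - tstar) / R) ≠ 0 := fun h0 => h (by simp [h0])
    have hmem := hχsupp hne
    apply ht
    obtain ⟨h1, h2⟩ := hmem
    rw [Set.mem_Icc]
    rw [lt_div_iff₀ hR] at h1
    rw [div_lt_iff₀ hR] at h2
    constructor <;> nlinarith
  have hwcs : HasCompactSupport w := HasCompactSupport.intro isCompact_Icc hwz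
  have hwint : Integrable w := hwcont.integrable_of_hasCompactSupport hwcs
  have hintw : (∫ t, w t) = 1 := by
    rw [hw]
    rw [MeasureTheory.integral_const_mul]
    have h1 : (∫ t : ℝ, χ ((t - tstar) / R)) = ∫ t : ℝ, (fun s => χ (s / R)) (t - tstar) := rfl
    rw [h1, integral_sub_right_eq_self (fun s => χ (s / R)) tstar,
      MeasureTheory.Measure.integral_comp_div χ R, hχint, smul_eq_mul, mul_one,
      abs_of_pos hR, inv_mul_cancel₀ (ne_of_gt hR)]
  -- coordinates of u are continuous
  have hui_cont : ∀ i : Fin n, Continuous (fun t => u t i) := by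
    intro i
    exact (EuclideanSpace.proj (𝕜 := ℝ) i).continuous.comp hucont
  have hInt : ∀ i : Fin n, Integrable (fun t => u t i * w t) := by
    intro i
    apply ((hui_cont i).mul hwcont).integrable_of_hasCompactSupport
    exact hwcs.mul_left
  -- mean value estimate
  set Cp : ℝ := M * Real.exp (M * (2 * R)) * a with hCp
  have hCp0 : 0 ≤ Cp := by positivity
  set B : ℝ := Cp * (2 * R) with hB
  have hB0 : 0 ≤ B := by positivity
  have hmvt : ∀ t ∈ Set.Icc (tstar - 2 * R) (tstar + 2 * R), ‖u t - u tstar‖ ≤ Cp * |t - tstar| := by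
    intro t ht
    have := Convex.norm_image_sub_le_of_norm_hasDerivWithin_le
      (f := u) (f' := d) (s := Set.Icc (tstar - 2 * R) (tstar + 2 * R)) (C := Cp) (x := tstar) (y := t)
      (fun x _ => (hu x).hasDerivWithinAt)
      (fun x hx => by
        refine le_trans (hd x) ?_
        rw [hCp, mul_assoc]
        apply mul_le_mul_of_nonneg_left _ hM.le
        calc ‖u x‖ ≤ Real.exp (M * |x - tstar|) * a := hgron tstar x
          _ ≤ Real.exp (M * (2 * R)) * a := by
              apply mul_le_mul_of_nonneg_right _ ha0
              apply Real.exp_le_exp.2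
              apply mul_le_mul_of_nonneg_left _ hM.le
              rw [abs_le]
              obtain ⟨hx1, hx2⟩ := hx
              constructor <;> linarith)
      (convex_Icc _ _)
      (Set.mem_Icc.2 ⟨by linarith, by linarith⟩)
      ht
    simpa [Real.norm_eq_abs] using this
  -- the averaged vector
  set v : EuclideanSpace ℝ (Fin n) :=
    WithLp.toLp 2 (fun i => ∫ t, u t i * (R⁻¹ * χ ((t - tstar) / R)) : Fin n → ℝ) with hv
  have hvi : ∀ i, v i = ∫ t, u t i * w t := fun i => rfl
  have hclose : ∀ i, |v i - u tstar i| ≤ B := by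
    intro i
    have h1 : v i - u tstar i = ∫ t, (u t i - u tstar i) * w t := by
      simp only [sub_mul]
      rw [integral_sub (hInt i) (hwint.const_mul (u tstar i)),
        MeasureTheory.integral_const_mul, hintw, mul_one, hvi]
    have hg_int : Integrable (fun t => (u t i - u tstar i) * w t) :=
      (hInt i).sub (hwint.const_mul (u tstar i)) |>.congr (by
        filter_upwards with t; simp only [Pi.sub_apply]; ring)
    have hpt : ∀ t, |(u t i - u tstar i) * w t| ≤ B * w t := by
      intro t
      rw [abs_mul, abs_of_nonneg (hw0 t)]
      by_cases ht : t ∈ Set.Icc (tstar - 2 * R) (tstar + 2 * R)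
      · apply mul_le_mul_of_nonneg_right _ (hw0 t)
        calc |u t i - u tstar i| = |(u t - u tstar) i| := by simp
          _ ≤ ‖u t - u tstar‖ := coord_abs_le _ i
          _ ≤ Cp * |t - tstar| := hmvt t ht
          _ ≤ Cp * (2 * R) := by
              apply mul_le_mul_of_nonneg_left _ hCp0
              rw [abs_le]; obtain ⟨h1, h2⟩ := ht; constructor <;> linarith
          _ = B := rfl
      · rw [hwz t ht]; simp
    rw [h1]
    calc |∫ t, (u t i - u tstar i) * w t| ≤ ∫ t, |(u t i - u tstar i) * w t| := by
          have := norm_integral_le_integral_norm (μ := (volume : Measure ℝ))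
            (fun t => (u t i - u tstar i) * w t)
          simp only [Real.norm_eq_abs] at this
          exact this
      _ ≤ ∫ t, B * w t := by
          apply integral_mono hg_int.abs (hwint.const_mul B)
          exact hpt
      _ = B := by rw [MeasureTheory.integral_const_mul, hintw, mul_one]
  -- distance between v and u tstar
  have hvdist : ‖v - u tstar‖ ≤ n * B := by
    have h1 : ‖v - u tstar‖ ^ 2 ≤ (n : ℝ) * B ^ 2 := by
      rw [euclid_norm_sq]
      calc ∑ i, ((v - u tstar) i) ^ 2 ≤ ∑ _i : Fin n, B ^ 2 := by
            apply Finset.sum_le_sum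
            intro i _
            have : (v - u tstar) i = v i - u tstar i := by simp
            rw [this, ← sq_abs]
            exact pow_le_pow_left₀ (abs_nonneg _) (hclose i) 2
        _ = (n : ℝ) * B ^ 2 := by simp [mul_comm]
    have h2 : ‖v - u tstar‖ ^ 2 ≤ ((n : ℝ) * B) ^ 2 := by
      calc ‖v - u tstar‖ ^ 2 ≤ (n : ℝ) * B ^ 2 := h1
        _ ≤ ((n : ℝ) * B) ^ 2 := by
            have h1n : (1:ℝ) ≤ (n:ℝ) := by exact_mod_cast hn
            nlinarith [mul_nonneg (mul_nonneg (sub_nonneg.2 h1n) hn'.le) (sq_nonneg B)]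
    calc ‖v - u tstar‖ = Real.sqrt (‖v - u tstar‖ ^ 2) := by
          rw [Real.sqrt_sq (norm_nonneg _)]
      _ ≤ Real.sqrt (((n : ℝ) * B) ^ 2) := Real.sqrt_le_sqrt h2
      _ = (n : ℝ) * B := Real.sqrt_sq (by positivity)
  -- smallness of n * B
  have hnB : (n : ℝ) * B ≤ a / 2 := by
    have hexp : Real.exp (M * (2 * R)) ≤ E2 := by
      rw [hE2]; apply Real.exp_le_exp.2; nlinarith
    have h1 : (n : ℝ) * B = 2 * R * (n : ℝ) * M * Real.exp (M * (2 * R)) * a := by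
      rw [hB, hCp]; ring
    rw [h1]
    have h2 : 2 * R * (n : ℝ) * M * Real.exp (M * (2 * R)) ≤ 2 * R * (n : ℝ) * M * E2 := by
      apply mul_le_mul_of_nonneg_left hexp (by positivity)
    have h3 : 2 * R * (n : ℝ) * M * E2 = R * D / 2 := by rw [hD]; ring
    have h4 : R * D / 2 ≤ 1 / 2 := by linarith
    nlinarith [mul_le_mul_of_nonneg_right (le_trans h2 (le_of_eq h3)) ha0,
      mul_le_mul_of_nonneg_right h4 ha0]
  -- lower bound on ‖v‖
  have hvlow : a / 2 ≤ ‖v‖ := by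
    have := norm_sub_norm_le (u tstar) v
    have h2 : ‖u tstar - v‖ = ‖v - u tstar‖ := norm_sub_rev _ _
    have h3 : ‖v - u tstar‖ ≤ a / 2 := le_trans hvdist hnB
    rw [← ha] at this
    linarith [this, h2 ▸ h3]
  have hsumv : ∑ i, (v i) ^ 2 = ‖v‖ ^ 2 := (euclid_norm_sq v).symm
  have hasq : a ^ 2 ≤ 4 * ∑ i, (v i) ^ 2 := by
    rw [hsumv]; nlinarith [norm_nonneg v]
  -- final chain
  have hfin : ‖u T‖ ^ 2 ≤ Real.exp (2 * M * |T - tstar|) * a ^ 2 := by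
    have h1 : ‖u T‖ ≤ Real.exp (M * |T - tstar|) * a := hgron tstar T
    have h2 : ‖u T‖ ^ 2 ≤ (Real.exp (M * |T - tstar|) * a) ^ 2 :=
      pow_le_pow_left₀ (norm_nonneg _) h1 2
    calc ‖u T‖ ^ 2 ≤ (Real.exp (M * |T - tstar|) * a) ^ 2 := h2
      _ = Real.exp (2 * M * |T - tstar|) * a ^ 2 := by
          rw [mul_pow, sq, ← Real.exp_add]; ring_nf
  have hexpC : Real.exp (2 * M * |T - tstar|) ≤ Real.exp (C * |T - tstar|) := by
    apply Real.exp_le_exp.2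
    apply mul_le_mul_of_nonneg_right _ (abs_nonneg _)
    rw [hC]; linarith
  have hgoal : ∑ i : Fin n, (∫ t, u t i * (R⁻¹ * χ ((t - tstar) / R))) ^ 2
      = ∑ i, (v i) ^ 2 := rfl
  rw [hgoal]
  have hsum0 : 0 ≤ ∑ i, (v i) ^ 2 := Finset.sum_nonneg fun i _ => sq_nonneg _
  calc ‖u T‖ ^ 2 ≤ Real.exp (2 * M * |T - tstar|) * a ^ 2 := hfin
    _ ≤ Real.exp (2 * M * |T - tstar|) * (4 * ∑ i, (v i) ^ 2) :=
        mul_le_mul_of_nonneg_left hasq (Real.exp_pos _).le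
    _ ≤ Real.exp (C * |T - tstar|) * (4 * ∑ i, (v i) ^ 2) :=
        mul_le_mul_of_nonneg_right hexpC (by positivity)
    _ ≤ C * Real.exp (C * |T - tstar|) * ∑ i, (v i) ^ 2 := by
        have h4C : (4 : ℝ) ≤ C := by rw [hC]; linarith
        have := mul_le_mul_of_nonneg_right
          (mul_le_mul_of_nonneg_left h4C (Real.exp_pos (C * |T - tstar|)).le) hsum0
        calc Real.exp (C * |T - tstar|) * (4 * ∑ i, (v i) ^ 2)
            = Real.exp (C * |T - tstar|) * 4 * ∑ i, (v i) ^ 2 := by ring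
          _ ≤ Real.exp (C * |T - tstar|) * C * ∑ i, (v i) ^ 2 := this
          _ = C * Real.exp (C * |T - tstar|) * ∑ i, (v i) ^ 2 := by ring
end

section
/- Let n ≥ 1 be an integer and M > 0. There exist C > 0 and R₀ > 0, depending only on n and M, such that the following holds. Let L : ℝ → M(n,ℝ) be continuous with ‖L(t)‖ ≤ M for all t ∈ ℝ, and let χ : ℝ → ℝ be smooth with support contained in (−2,2), with 0 ≤ χ ≤ 1 and ∫_ℝ χ = 1. Then for every R with 0 < R < R₀, every v ∈ ℝⁿ, every t⋆ > 2R, and every T > t⋆ + 2R, there exist a ∈ ℝⁿ and a differentiable function w : ℝ → ℝⁿ with w'(t) = L(t) w(t) + R^{−1} χ((t − t⋆)/R) · a for all t ∈ ℝ, w(0) = 0, w(T) = v, and ‖a‖ ≤ C e^{C|T − t⋆|} ‖v‖. -/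
open MeasureTheory

open Set Filter Topology NNReal

section ODEAux

set_option linter.unusedSectionVars false

variable {E : Type*} [NormedAddCommGroup E] [NormedSpace ℝ E] [CompleteSpace E]

lemma aux_hasDerivWithinAt_of_nmem_closure {f : ℝ → E} {f' : E} {x : ℝ} {s : Set ℝ}
    (h : x ∉ closure s) : HasDerivWithinAt f f' s x :=
  hasDerivWithinAt_iff_hasFDerivWithinAt.mpr (HasFDerivWithinAt.of_notMem_closure h)

lemma ode_lipschitz (A : ℝ → E →L[ℝ] E) (g : ℝ → E) (M : ℝ) (hM : 0 < M)
    (hAb : ∀ t, ‖A t‖ ≤ M) (t : ℝ) : LipschitzWith M.toNNReal (fun x => A t x + g t) := by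
  apply LipschitzWith.of_dist_le_mul
  intro x y
  rw [Real.coe_toNNReal M hM.le, dist_add_right, dist_eq_norm, dist_eq_norm, ← map_sub]
  calc ‖A t (x - y)‖ ≤ ‖A t‖ * ‖x - y‖ := (A t).le_opNorm _
    _ ≤ M * ‖x - y‖ := mul_le_mul_of_nonneg_right (hAb t) (norm_nonneg _)

lemma ode_local (A : ℝ → E →L[ℝ] E) (g : ℝ → E) (M G : ℝ) (hM : 0 < M)
    (hA : Continuous A) (hg : Continuous g) (hAb : ∀ t, ‖A t‖ ≤ M) (hgb : ∀ t, ‖g t‖ ≤ G)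
    (t₀ : ℝ) (x₀ : E) :
    ∃ f : ℝ → E, f t₀ = x₀ ∧ ∀ t ∈ Icc (t₀ - (2*(M+1))⁻¹) (t₀ + (2*(M+1))⁻¹),
      HasDerivWithinAt f (A t (f t) + g t) (Icc (t₀ - (2*(M+1))⁻¹) (t₀ + (2*(M+1))⁻¹)) t := by
  have hG : 0 ≤ G := le_trans (norm_nonneg _) (hgb 0)
  have hτ : 0 < (2*(M+1))⁻¹ := by positivity
  set τ : ℝ := (2*(M+1))⁻¹ with hτdef
  set R' : ℝ := 2*τ*(M*‖x₀‖+G)+1 with hR'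
  have hR'0 : 0 ≤ R' := by positivity
  have hpl : IsPicardLindelof (fun t x => A t x + g t)
      (⟨t₀, ⟨by linarith, by linarith⟩⟩ : Icc (t₀ - τ) (t₀ + τ)) x₀ ⟨R', hR'0⟩ 0
      ⟨M*(‖x₀‖+R')+G, by positivity⟩ M.toNNReal := by
    constructor
    · exact fun t _ => (ode_lipschitz A g M hM hAb t).lipschitzOnWith
    · exact fun x _ => ((hA.clm_apply continuous_const).add hg).continuousOn
    · intro t _ x hx
      have h1 : ‖x‖ ≤ ‖x₀‖ + R' := by
        have h2 : ‖x - x₀‖ ≤ R' := mem_closedBall_iff_norm.mp hx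
        have h3 : ‖x‖ - ‖x₀‖ ≤ ‖x - x₀‖ := norm_sub_norm_le x x₀
        linarith
      show ‖A t x + g t‖ ≤ M*(‖x₀‖+R')+G
      calc ‖A t x + g t‖ ≤ ‖A t x‖ + ‖g t‖ := norm_add_le _ _
        _ ≤ M*‖x‖ + G := add_le_add
            (le_trans ((A t).le_opNorm x) (mul_le_mul_of_nonneg_right (hAb t) (norm_nonneg x)))
            (hgb t)
        _ ≤ M*(‖x₀‖+R')+G := by nlinarith
    · have hmax : max ((t₀+τ) - t₀) (t₀ - (t₀-τ)) = τ := by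
        rw [add_sub_cancel_left, sub_sub_cancel, max_self]
      simp only [NNReal.coe_mk, NNReal.coe_zero, sub_zero, tsub_zero]
      rw [hmax]
      show (M*(‖x₀‖+R')+G) * τ ≤ R'
      have h2 : 2*τ*M + 2*τ = 1 := by
        have h1 : τ * (2*(M+1)) = 1 := by
          rw [hτdef]; field_simp
        nlinarith
      have hx0 : (0:ℝ) ≤ ‖x₀‖ := norm_nonneg _
      have hτM : τ * M ≤ 1/2 := by nlinarith
      have h3 : τ * M * R' ≤ R' / 2 := by nlinarith
      have h4 : τ * (M*‖x₀‖+G) = (R' - 1)/2 := by rw [hR']; ring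
      nlinarith
  obtain ⟨f, hf0, hfD⟩ := hpl.exists_eq_forall_mem_Icc_hasDerivWithinAt₀
  exact ⟨f, hf0, hfD⟩

lemma ode_unique (A : ℝ → E →L[ℝ] E) (g : ℝ → E) (M : ℝ) (hM : 0 < M)
    (hAb : ∀ t, ‖A t‖ ≤ M) {a b t₀ : ℝ} (ht₀ : t₀ ∈ Ioo a b) {f h : ℝ → E}
    (hf : ∀ t ∈ Icc a b, HasDerivWithinAt f (A t (f t) + g t) (Icc a b) t)
    (hh : ∀ t ∈ Icc a b, HasDerivWithinAt h (A t (h t) + g t) (Icc a b) t)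
    (heq : f t₀ = h t₀) : EqOn f h (Icc a b) := by
  have hv : ∀ t, LipschitzOnWith M.toNNReal (fun x => A t x + g t) (univ : Set E) :=
    fun t => (ode_lipschitz A g M hM hAb t).lipschitzOnWith
  exact ODE_solution_unique_of_mem_Icc (fun t _ => hv t) ht₀
    (fun t ht => (hf t ht).continuousWithinAt)
    (fun t ht => (hf t (Ioo_subset_Icc_self ht)).hasDerivAt (Icc_mem_nhds ht.1 ht.2))
    (fun t _ => mem_univ _)
    (fun t ht => (hh t ht).continuousWithinAt)
    (fun t ht => (hh t (Ioo_subset_Icc_self ht)).hasDerivAt (Icc_mem_nhds ht.1 ht.2))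
    (fun t _ => mem_univ _) heq

lemma ode_global (A : ℝ → E →L[ℝ] E) (g : ℝ → E) (M G : ℝ) (hM : 0 < M)
    (hA : Continuous A) (hg : Continuous g) (hAb : ∀ t, ‖A t‖ ≤ M) (hgb : ∀ t, ‖g t‖ ≤ G)
    (t₀ : ℝ) (x₀ : E) :
    ∃ w : ℝ → E, w t₀ = x₀ ∧ ∀ t, HasDerivAt w (A t (w t) + g t) t := by
  have hτ : 0 < (2*(M+1))⁻¹ := by positivity
  set τ : ℝ := (2*(M+1))⁻¹ with hτdef
  -- existence on each compact interval around t₀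
  have hex : ∀ k : ℕ, ∃ f : ℝ → E, f t₀ = x₀ ∧ ∀ t ∈ Icc (t₀ - (k+1)*τ) (t₀ + (k+1)*τ),
      HasDerivWithinAt f (A t (f t) + g t) (Icc (t₀ - (k+1)*τ) (t₀ + (k+1)*τ)) t := by
    intro k
    induction k with
    | zero =>
      obtain ⟨f, h1, h2⟩ := ode_local A g M G hM hA hg hAb hgb t₀ x₀
      refine ⟨f, h1, ?_⟩
      simp only [Nat.cast_zero, zero_add, one_mul]
      exact h2
    | succ k ih =>
      obtain ⟨F, hF0, hFD⟩ := ih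
      set a : ℝ := t₀ - (k+1)*τ with ha
      set b : ℝ := t₀ + (k+1)*τ with hb
      have hk1 : (0:ℝ) ≤ ((k:ℝ)+1)*τ := by positivity
      have hab : a ≤ b := by rw [ha, hb]; linarith
      obtain ⟨Fm, hFm0, hFmD⟩ := ode_local A g M G hM hA hg hAb hgb a (F a)
      obtain ⟨Fp, hFp0, hFpD⟩ := ode_local A g M G hM hA hg hAb hgb b (F b)
      set W : ℝ → E := fun t => if t < a then Fm t else if t ≤ b then F t else Fp t with hWdef
      have hWm : ∀ s ∈ Icc (a-τ) a, W s = Fm s := by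
        intro s hs
        rcases lt_or_eq_of_le hs.2 with h | h
        · simp only [hWdef, if_pos h]
        · have hWa : W a = Fm a := by
            simp only [hWdef]
            rw [if_neg (lt_irrefl a), if_pos hab]
            exact hFm0.symm
          rw [h, hWa]
      have hWF : ∀ s ∈ Icc a b, W s = F s := by
        intro s hs
        simp only [hWdef, if_neg (not_lt.mpr hs.1), if_pos hs.2]
      have hWp : ∀ s ∈ Icc b (b+τ), W s = Fp s := by
        intro s hs
        rcases lt_or_eq_of_le hs.1 with h | h
        · simp only [hWdef, if_neg (not_lt.mpr (le_trans hab (le_of_lt h))),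
            if_neg (not_le.mpr h)]
        · have hWb : W b = Fp b := by
            simp only [hWdef]
            rw [if_neg (not_lt.mpr hab), if_pos le_rfl]
            exact hFp0.symm
          rw [← h, hWb]
      have e1 : t₀ - ((↑(k+1):ℝ)+1)*τ = a - τ := by rw [ha]; push_cast; ring
      have e2 : t₀ + ((↑(k+1):ℝ)+1)*τ = b + τ := by rw [hb]; push_cast; ring
      have hsplit : Icc (t₀ - ((↑(k+1):ℝ)+1)*τ) (t₀ + ((↑(k+1):ℝ)+1)*τ)
          = Icc (a-τ) a ∪ (Icc a b ∪ Icc b (b+τ)) := by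
        rw [Icc_union_Icc_eq_Icc hab (by linarith), Icc_union_Icc_eq_Icc (by linarith) (by linarith),
          e1, e2]
      refine ⟨W, ?_, ?_⟩
      · rw [hWF t₀ ⟨by rw [ha]; linarith, by rw [hb]; linarith⟩]
        exact hF0
      · intro t ht
        rw [hsplit]
        have d1 : HasDerivWithinAt W (A t (W t) + g t) (Icc (a-τ) a) t := by
          by_cases h : t ∈ Icc (a-τ) a
          · have hmem : t ∈ Icc (a-τ) (a+τ) := ⟨h.1, by linarith [h.2, hτ.le]⟩
            have h5 := ((hFmD t hmem).mono (Icc_subset_Icc le_rfl (by linarith))).congr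
              hWm (hWm t h)
            rwa [← hWm t h] at h5
          · exact aux_hasDerivWithinAt_of_nmem_closure (by rwa [isClosed_Icc.closure_eq])
        have d2 : HasDerivWithinAt W (A t (W t) + g t) (Icc a b) t := by
          by_cases h : t ∈ Icc a b
          · have h5 := (hFD t h).congr hWF (hWF t h)
            rwa [← hWF t h] at h5
          · exact aux_hasDerivWithinAt_of_nmem_closure (by rwa [isClosed_Icc.closure_eq])
        have d3 : HasDerivWithinAt W (A t (W t) + g t) (Icc b (b+τ)) t := by
          by_cases h : t ∈ Icc b (b+τ)
          · have hmem : t ∈ Icc (b-τ) (b+τ) := ⟨by linarith [h.1, hτ.le], h.2⟩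
            have h5 := ((hFpD t hmem).mono (Icc_subset_Icc (by linarith) le_rfl)).congr
              hWp (hWp t h)
            rwa [← hWp t h] at h5
          · exact aux_hasDerivWithinAt_of_nmem_closure (by rwa [isClosed_Icc.closure_eq])
        exact d1.union (d2.union d3)
  choose sol h0 hD using hex
  have hmono : ∀ j k : ℕ, j ≤ k →
      Icc (t₀ - ((j:ℝ)+1)*τ) (t₀ + ((j:ℝ)+1)*τ) ⊆ Icc (t₀ - ((k:ℝ)+1)*τ) (t₀ + ((k:ℝ)+1)*τ) := by
    intro j k hjk
    have hjk' : ((j:ℝ)+1)*τ ≤ ((k:ℝ)+1)*τ := by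
      have : (j:ℝ) ≤ (k:ℝ) := Nat.cast_le.mpr hjk
      nlinarith
    exact Icc_subset_Icc (by linarith) (by linarith)
  have huniq : ∀ j k : ℕ, ∀ t, t ∈ Icc (t₀ - ((j:ℝ)+1)*τ) (t₀ + ((j:ℝ)+1)*τ) →
      t ∈ Icc (t₀ - ((k:ℝ)+1)*τ) (t₀ + ((k:ℝ)+1)*τ) → sol j t = sol k t := by
    have main : ∀ j k : ℕ, j ≤ k → ∀ t ∈ Icc (t₀ - ((j:ℝ)+1)*τ) (t₀ + ((j:ℝ)+1)*τ),
        sol j t = sol k t := by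
      intro j k hjk t ht
      have hj1 : (0:ℝ) < ((j:ℝ)+1)*τ := by positivity
      have hIoo : t₀ ∈ Ioo (t₀ - ((j:ℝ)+1)*τ) (t₀ + ((j:ℝ)+1)*τ) :=
        Set.mem_Ioo.mpr ⟨by linarith, by linarith⟩
      have heq0 : sol j t₀ = sol k t₀ := by rw [h0 j, h0 k]
      exact ode_unique A g M hM hAb hIoo (hD j)
        (fun s hs => (hD k s (hmono j k hjk hs)).mono (hmono j k hjk)) heq0 ht
    intro j k t htj htk
    rcases le_total j k with h | h
    · exact main j k h t htj
    · exact (main k j h t htk).symm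
  set idx : ℝ → ℕ := fun t => ⌈|t - t₀| / τ⌉₊ with hidx
  have hmem : ∀ t, t ∈ Icc (t₀ - ((idx t : ℝ)+1)*τ) (t₀ + ((idx t : ℝ)+1)*τ) := by
    intro t
    have h1 : |t - t₀| / τ ≤ (idx t : ℝ) := Nat.le_ceil _
    have h2 : |t - t₀| ≤ (idx t : ℝ) * τ := by
      rw [div_le_iff₀ hτ] at h1; linarith
    have h3 := abs_le.mp (le_trans h2 (by nlinarith : (idx t : ℝ) * τ ≤ ((idx t : ℝ)+1)*τ))
    exact ⟨by linarith [h3.1], by linarith [h3.2]⟩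
  refine ⟨fun t => sol (idx t) t, h0 _, ?_⟩
  intro t
  set k : ℕ := idx t + 1 with hk
  have hlt : |t - t₀| < ((k:ℝ)+1)*τ := by
    have h1 : |t - t₀| / τ ≤ ((idx t : ℝ)) := Nat.le_ceil _
    have h2 : |t - t₀| ≤ (idx t : ℝ) * τ := by
      rw [div_le_iff₀ hτ] at h1; linarith
    have : ((k:ℝ)) = (idx t : ℝ) + 1 := by rw [hk]; push_cast; ring
    nlinarith
  have hint : t ∈ Ioo (t₀ - ((k:ℝ)+1)*τ) (t₀ + ((k:ℝ)+1)*τ) := by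
    have := abs_lt.mp hlt
    exact ⟨by linarith [this.1], by linarith [this.2]⟩
  have hev : (fun s => sol (idx s) s) =ᶠ[𝓝 t] sol k := by
    have hopen : IsOpen {s : ℝ | |s - t₀| < ((k:ℝ)+1)*τ} :=
      isOpen_lt (by fun_prop) continuous_const
    filter_upwards [hopen.mem_nhds hlt] with s hs
    have hsk : s ∈ Icc (t₀ - ((k:ℝ)+1)*τ) (t₀ + ((k:ℝ)+1)*τ) := by
      have := abs_lt.mp hs
      exact ⟨by linarith [this.1], by linarith [this.2]⟩
    exact huniq (idx s) k s (hmem s) hsk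
  have hd : HasDerivAt (sol k) (A t (sol k t) + g t) t :=
    (hD k t (Ioo_subset_Icc_self hint)).hasDerivAt (Icc_mem_nhds hint.1 hint.2)
  have hd2 : HasDerivAt (fun s => sol (idx s) s) (A t (sol k t) + g t) t :=
    hd.congr_of_eventuallyEq hev
  rwa [huniq k (idx t) t (Ioo_subset_Icc_self hint) (hmem t)] at hd2

/-- Grönwall wrapper, forward in time. -/
lemma gron_le {w d : ℝ → E} {a b δ K ε : ℝ} (hab : a ≤ b)
    (hw : ∀ t, HasDerivAt w (d t) t) (hδ : ‖w a‖ ≤ δ)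
    (hb : ∀ t ∈ Icc a b, ‖d t‖ ≤ K * ‖w t‖ + ε) :
    ‖w b‖ ≤ gronwallBound δ K ε (b - a) :=
  norm_le_gronwallBound_of_norm_deriv_right_le
    (fun t _ => (hw t).continuousAt.continuousWithinAt)
    (fun t _ => (hw t).hasDerivWithinAt) hδ
    (fun t ht => hb t (Ico_subset_Icc_self ht)) b ⟨hab, le_rfl⟩

/-- Grönwall wrapper, backward in time. -/
lemma gron_le_rev {w d : ℝ → E} {a b δ K ε : ℝ} (hab : a ≤ b)
    (hw : ∀ t, HasDerivAt w (d t) t) (hδ : ‖w b‖ ≤ δ)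
    (hb : ∀ t ∈ Icc a b, ‖d t‖ ≤ K * ‖w t‖ + ε) :
    ‖w a‖ ≤ gronwallBound δ K ε (b - a) := by
  have hw' : ∀ s, HasDerivAt (fun s => w (a + b - s)) (-d (a + b - s)) s := by
    intro s
    have hinner : HasDerivAt (fun s : ℝ => a + b - s) (-1) s := by
      simpa using (hasDerivAt_id s).const_sub (a + b)
    have h2 := (hw (a + b - s)).scomp s hinner
    simpa [Function.comp_def] using h2
  have hδ' : ‖w (a + b - a)‖ ≤ δ := by
    rw [show a + b - a = b by ring]; exact hδ
  have hb' : ∀ t ∈ Icc a b, ‖-d (a + b - t)‖ ≤ K * ‖w (a + b - t)‖ + ε := by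
    intro t htt
    rw [norm_neg]
    exact hb _ ⟨by linarith [htt.2], by linarith [htt.1]⟩
  have key := gron_le (w := fun s => w (a + b - s)) (d := fun s => -d (a + b - s))
    hab hw' hδ' hb'
  have hba : a + b - b = a := by ring
  rw [hba] at key
  exact key

end ODEAux


noncomputable def matCLM (n : ℕ) : Matrix (Fin n) (Fin n) ℝ →ₗ[ℝ]
    (EuclideanSpace ℝ (Fin n) →L[ℝ] EuclideanSpace ℝ (Fin n)) where
  toFun B := Matrix.toEuclideanCLM (𝕜 := ℝ) B
  map_add' x y := by simp
  map_smul' c x := by simp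

set_option maxHeartbeats 1000000 in
/-- **controllability.** Let `n ≥ 1` and `M > 0`. There are `C > 0` and `R₀ > 0`,
depending only on `n` and `M`, such that: if `L` is continuous with `‖L(t)‖ ≤ M` for all `t`,
`χ ∈ C_c^∞((−2,2);[0,1])` with `∫χ = 1`, then for all `0 < R < R₀`, `v ∈ ℝⁿ`, `t⋆ > 2R` and
`T > t⋆ + 2R`, there are `a ∈ ℝⁿ` and a solution `w` of
`w' = L(t)w + R⁻¹χ((t−t⋆)/R)·a`, `w(0) = 0`, with `w(T) = v` and
`‖a‖ ≤ C e^{C|T−t⋆|} ‖v‖`. -/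
theorem ode_controllability
    (n : ℕ) (hn : 1 ≤ n) (M : ℝ) (hM : 0 < M) :
    ∃ C : ℝ, 0 < C ∧ ∃ R₀ : ℝ, 0 < R₀ ∧
      ∀ L : ℝ → Matrix (Fin n) (Fin n) ℝ,
        (∀ i j : Fin n, Continuous fun t => L t i j) →
        (∀ t : ℝ, Matrix.euclideanOpNorm (L t) ≤ M) →
      ∀ χ : ℝ → ℝ, (∀ k : ℕ, ContDiff ℝ k χ) → Function.support χ ⊆ Set.Ioo (-2 : ℝ) 2 →
        (∀ x, 0 ≤ χ x) → (∀ x, χ x ≤ 1) → (∫ x, χ x) = 1 →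
      ∀ R : ℝ, 0 < R → R < R₀ →
      ∀ v : EuclideanSpace ℝ (Fin n), ∀ tstar : ℝ, 2 * R < tstar → ∀ T : ℝ, tstar + 2 * R < T →
        ∃ (a : EuclideanSpace ℝ (Fin n)) (w : ℝ → EuclideanSpace ℝ (Fin n)),
          (∀ t : ℝ, HasDerivAt w
            (Matrix.toEuclideanCLM (𝕜 := ℝ) (L t) (w t) + (R⁻¹ * χ ((t - tstar) / R)) • a) t) ∧
          w 0 = 0 ∧ w T = v ∧ ‖a‖ ≤ C * Real.exp (C * |T - tstar|) * ‖v‖ := by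
  refine ⟨M + 2, by linarith, Real.log (3/2) / (4*M), by positivity, ?_⟩
  intro L hLc hLb χ hχsm hχsupp hχ0 hχ1 hχint R hR hRR₀ v tstar htstar T hT
  have hlog : (0:ℝ) < Real.log (3/2) := Real.log_pos (by norm_num)
  -- the matrix as a continuous family of operators
  set A : ℝ → (EuclideanSpace ℝ (Fin n) →L[ℝ] EuclideanSpace ℝ (Fin n)) :=
    fun t => Matrix.toEuclideanCLM (𝕜 := ℝ) (L t) with hAdef
  have hL : Continuous L := continuous_matrix hLc
  have hA : Continuous A := by
    rw [hAdef]
    exact (((matCLM n).continuous_of_finiteDimensional).comp hL).congr fun t => rfl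
  have hAb : ∀ t, ‖A t‖ ≤ M := fun t => hLb t
  -- the control bump
  have hχc : Continuous χ := (hχsm 0).continuous
  set f : ℝ → ℝ := fun t => R⁻¹ * χ ((t - tstar) / R) with hfdef
  have hfc : Continuous f := by
    apply continuous_const.mul
    exact hχc.comp ((continuous_id.sub continuous_const).div_const R)
  have hfnn : ∀ t, 0 ≤ f t := fun t => mul_nonneg (by positivity) (hχ0 _)
  have hfb : ∀ t, f t ≤ R⁻¹ := by
    intro t
    calc f t ≤ R⁻¹ * 1 := mul_le_mul_of_nonneg_left (hχ1 _) (by positivity)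
      _ = R⁻¹ := mul_one _
  set t₁ : ℝ := tstar - 2*R with ht₁
  set t₂ : ℝ := tstar + 2*R with ht₂
  have ht₁pos : 0 < t₁ := by rw [ht₁]; linarith
  have ht₁₂ : t₁ < t₂ := by rw [ht₁, ht₂]; linarith
  have ht₂T : t₂ < T := by rw [ht₂]; linarith
  have hχzero : ∀ x : ℝ, x ∉ Set.Ioo (-2:ℝ) 2 → χ x = 0 := by
    intro x hx
    by_contra h
    exact hx (hχsupp (Function.mem_support.mpr h))
  have hf_lt : ∀ t ≤ t₁, f t = 0 := by
    intro t ht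
    have : (t - tstar)/R ≤ -2 := by
      rw [div_le_iff₀ hR]
      rw [ht₁] at ht
      linarith
    rw [hfdef]
    simp only
    rw [hχzero _ (by intro hx; linarith [hx.1]), mul_zero]
  have hf_gt : ∀ t, t₂ ≤ t → f t = 0 := by
    intro t ht
    have : (2:ℝ) ≤ (t - tstar)/R := by
      rw [le_div_iff₀ hR]
      rw [ht₂] at ht
      linarith
    rw [hfdef]
    simp only
    rw [hχzero _ (by intro hx; linarith [hx.2]), mul_zero]
  -- the mass function
  set m : ℝ → ℝ := fun t => ∫ s in t₁..t, f s with hmdef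
  have hm : ∀ t, HasDerivAt m (f t) t := fun t => (hfc.integral_hasStrictDerivAt t₁ t).hasDerivAt
  have hm0 : m t₁ = 0 := intervalIntegral.integral_same
  have hm1 : m t₂ = 1 := by
    have step3 : (∫ x in (-2:ℝ)..2, χ x) = 1 := by
      rw [intervalIntegral.integral_of_le (by norm_num : (-2:ℝ) ≤ 2),
        setIntegral_eq_integral_of_forall_compl_eq_zero
          (fun x hx => hχzero x (fun h => hx (Set.Ioo_subset_Ioc_self h)))]
      exact hχint
    have step2 : (∫ s in (-(2*R))..(2*R), χ (s / R)) = R := by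
      rw [intervalIntegral.integral_comp_div (f := χ) (fun h => (ne_of_gt hR) h)]
      rw [show -(2*R)/R = -2 by field_simp, show 2*R/R = 2 by field_simp]
      rw [step3]
      simp
    have step1 : m t₂ = R⁻¹ * ∫ s in (-(2*R))..(2*R), χ (s / R) := by
      rw [hmdef]
      simp only
      rw [intervalIntegral.integral_const_mul]
      congr 1
      have : ∀ s:ℝ, χ ((s - tstar)/R) = (fun u => χ (u / R)) (s - tstar) := fun s => rfl
      rw [intervalIntegral.integral_congr (g := fun s => (fun u => χ (u/R)) (s - tstar)) (fun s _ => rfl)]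
      rw [intervalIntegral.integral_comp_sub_right (fun u => χ (u/R)) tstar]
      congr 1 <;> [rw [ht₁]; rw [ht₂]] <;> ring
    rw [step1, step2]
    field_simp
  have hmmono : ∀ t ∈ Icc t₁ t₂, 0 ≤ m t ∧ m t ≤ 1 := by
    intro t ht
    have hint1 : IntervalIntegrable f volume t₁ t := hfc.intervalIntegrable _ _
    have hint2 : IntervalIntegrable f volume t t₂ := hfc.intervalIntegrable _ _
    constructor
    · exact intervalIntegral.integral_nonneg ht.1 (fun s _ => hfnn s)
    · have hadd : m t + ∫ s in t..t₂, f s = m t₂ :=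
        intervalIntegral.integral_add_adjacent_intervals hint1 hint2
      have hnn : 0 ≤ ∫ s in t..t₂, f s :=
        intervalIntegral.integral_nonneg ht.2 (fun s _ => hfnn s)
      rw [hm1] at hadd
      linarith
  -- key estimate for the control phase
  have key : ∀ (c : EuclideanSpace ℝ (Fin n)) (w : ℝ → EuclideanSpace ℝ (Fin n)),
      (∀ t, HasDerivAt w (A t (w t) + f t • c) t) → w t₁ = 0 →
      ‖w t₂ - c‖ ≤ (Real.exp (M * (t₂ - t₁)) - 1) * ‖c‖ := by
    intro c w hw h0
    set z : ℝ → EuclideanSpace ℝ (Fin n) := fun t => w t - m t • c with hz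
    have hz' : ∀ t, HasDerivAt z (A t (w t)) t := by
      intro t
      have h1 : HasDerivAt (fun t => m t • c) (f t • c) t := (hm t).smul_const c
      have h2 := (hw t).sub h1
      rw [add_sub_cancel_right] at h2
      exact h2
    have hend : ‖z t₂‖ ≤ gronwallBound 0 M (M * ‖c‖) (t₂ - t₁) := by
      apply gron_le ht₁₂.le hz'
      · simp [hz, hm0, h0]
      · intro t ht
        have hrw : w t = z t + m t • c := by simp [hz]
        have : A t (w t) = A t (z t) + m t • (A t c) := by
          rw [hrw, map_add, _root_.map_smul]
        rw [this]
        have e1 : ‖A t (z t)‖ ≤ M * ‖z t‖ :=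
          le_trans ((A t).le_opNorm _) (mul_le_mul_of_nonneg_right (hAb t) (norm_nonneg _))
        have e2 : ‖m t • A t c‖ ≤ M * ‖c‖ := by
          rw [norm_smul, Real.norm_eq_abs, abs_of_nonneg (hmmono t ht).1]
          have := (hmmono t ht).2
          have e3 : ‖A t c‖ ≤ M * ‖c‖ :=
            le_trans ((A t).le_opNorm _) (mul_le_mul_of_nonneg_right (hAb t) (norm_nonneg _))
          nlinarith [norm_nonneg (A t c), (hmmono t ht).1]
        calc ‖A t (z t) + m t • A t c‖ ≤ ‖A t (z t)‖ + ‖m t • A t c‖ := norm_add_le _ _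
          _ ≤ M * ‖z t‖ + M * ‖c‖ := add_le_add e1 e2
    have hzt₂ : z t₂ = w t₂ - c := by rw [hz]; simp [hm1]
    rw [hzt₂] at hend
    have hgb2 : gronwallBound 0 M (M * ‖c‖) (t₂ - t₁)
        = (Real.exp (M * (t₂ - t₁)) - 1) * ‖c‖ := by
      simp only [gronwallBound_of_K_ne_0 hM.ne']
      field_simp
      ring
    rwa [hgb2] at hend
  have half : Real.exp (M * (t₂ - t₁)) - 1 ≤ 1/2 := by
    have h1 : M * (t₂ - t₁) = 4 * M * R := by rw [ht₁, ht₂]; ring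
    have h2 : 4 * M * R < Real.log (3/2) := by
      have h4 := (lt_div_iff₀ (by positivity : (0:ℝ) < 4*M)).mp hRR₀
      nlinarith
    have h3 : Real.exp (M * (t₂ - t₁)) < 3/2 := by
      rw [h1]
      calc Real.exp (4*M*R) < Real.exp (Real.log (3/2)) := Real.exp_lt_exp.mpr h2
        _ = 3/2 := Real.exp_log (by norm_num)
    linarith
  -- global solutions for each control vector c
  have glob : ∀ c : EuclideanSpace ℝ (Fin n), ∃ w : ℝ → EuclideanSpace ℝ (Fin n),
      w t₁ = 0 ∧ ∀ t, HasDerivAt w (A t (w t) + f t • c) t := by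
    intro c
    apply ode_global A (fun t => f t • c) M (R⁻¹ * ‖c‖) hM hA
      (hfc.smul continuous_const) hAb
    · intro t
      rw [norm_smul, Real.norm_eq_abs, abs_of_nonneg (hfnn t)]
      exact mul_le_mul_of_nonneg_right (hfb t) (norm_nonneg c)
  choose sol hsol0 hsolD using glob
  -- the target value at time t₂, via the backward homogeneous flow
  obtain ⟨q, hq0, hqD⟩ := ode_global (fun s => -(A (T - s))) (fun _ => (0:EuclideanSpace ℝ (Fin n)))
    M 0 hM ((hA.comp (continuous_const.sub continuous_id)).neg) continuous_const
    (fun s => by rw [norm_neg]; exact hAb _) (fun s => by simp) 0 v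
  set p : ℝ → EuclideanSpace ℝ (Fin n) := fun t => q (T - t) with hpdef
  have hpD : ∀ t, HasDerivAt p (A t (p t)) t := by
    intro t
    have hinner : HasDerivAt (fun s : ℝ => T - s) (-1) t := by
      simpa using (hasDerivAt_id t).const_sub T
    have e : (-1:ℝ) • ((-(A (T - (T - t)))) (q (T - t)) + 0) = A t (q (T - t)) := by
      rw [show T - (T - t) = t by ring, add_zero, ContinuousLinearMap.neg_apply]
      simp only [smul_neg, neg_smul, one_smul, neg_neg]
    have h2 := (hqD (T - t)).scomp t hinner
    rw [e] at h2
    exact h2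
  have hpT : p T = v := by rw [hpdef]; simp [hq0]
  set u : EuclideanSpace ℝ (Fin n) := p t₂ with hudef
  have hu : ‖u‖ ≤ Real.exp (M * (T - t₂)) * ‖v‖ := by
    have h := gron_le (w := q) (d := fun s => (-(A (T - s))) (q s) + 0) (a := 0) (b := T - t₂)
      (δ := ‖v‖) (K := M) (ε := 0)
      (by linarith) hqD (by rw [hq0])
      (fun s hs => by
        simp only [add_zero, ContinuousLinearMap.neg_apply, norm_neg]
        have := le_trans ((A (T-s)).le_opNorm (q s)) (mul_le_mul_of_nonneg_right (hAb (T-s)) (norm_nonneg _))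
        linarith)
    rw [gronwallBound_ε0, sub_zero] at h
    have : q (T - t₂) = u := by rw [hudef, hpdef]
    rw [this] at h
    calc ‖u‖ ≤ ‖v‖ * Real.exp (M * (T - t₂)) := h
      _ = Real.exp (M * (T - t₂)) * ‖v‖ := by ring
  -- contraction mapping to find the control vector
  set Φ : EuclideanSpace ℝ (Fin n) → EuclideanSpace ℝ (Fin n) :=
    fun c => u - (sol c t₂ - c) with hΦdef
  have keyhalf : ∀ c : EuclideanSpace ℝ (Fin n), ∀ w : ℝ → EuclideanSpace ℝ (Fin n),
      (∀ t, HasDerivAt w (A t (w t) + f t • c) t) → w t₁ = 0 →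
      ‖w t₂ - c‖ ≤ (1/2) * ‖c‖ := by
    intro c w hw h0
    calc ‖w t₂ - c‖ ≤ (Real.exp (M * (t₂ - t₁)) - 1) * ‖c‖ := key c w hw h0
      _ ≤ (1/2) * ‖c‖ := mul_le_mul_of_nonneg_right half (norm_nonneg _)
  have hlip : LipschitzWith (1/2 : ℝ≥0) Φ := by
    apply LipschitzWith.of_dist_le_mul
    intro c₁ c₂
    set y : ℝ → EuclideanSpace ℝ (Fin n) := fun t => sol c₁ t - sol c₂ t with hy
    have hyD : ∀ t, HasDerivAt y (A t (y t) + f t • (c₁ - c₂)) t := by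
      intro t
      have h2 := (hsolD c₁ t).sub (hsolD c₂ t)
      have h3 : A t (sol c₁ t) + f t • c₁ - (A t (sol c₂ t) + f t • c₂)
          = A t (y t) + f t • (c₁ - c₂) := by
        rw [hy]
        simp only [map_sub, smul_sub]
        abel
      rwa [h3] at h2
    have hy0 : y t₁ = 0 := by rw [hy]; simp [hsol0]
    have hk := keyhalf (c₁ - c₂) y hyD hy0
    have hdist : dist (Φ c₁) (Φ c₂) = ‖y t₂ - (c₁ - c₂)‖ := by
      rw [dist_eq_norm]
      have e : Φ c₁ - Φ c₂ = -(y t₂ - (c₁ - c₂)) := by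
        simp only [hΦdef, hy]
        abel
      rw [e, norm_neg]
    rw [hdist, dist_eq_norm]
    calc ‖y t₂ - (c₁ - c₂)‖ ≤ (1/2) * ‖c₁ - c₂‖ := hk
      _ = ((1/2 : ℝ≥0) : ℝ) * ‖c₁ - c₂‖ := by norm_num
  have hcontr : ContractingWith (1/2 : ℝ≥0) Φ :=
    ⟨by exact_mod_cast (by norm_num : (1/2:ℝ) < 1), hlip⟩
  set a₀ : EuclideanSpace ℝ (Fin n) := ContractingWith.fixedPoint Φ hcontr with ha₀def
  have hfix : Φ a₀ = a₀ := hcontr.fixedPoint_isFixedPt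
  have hWu : sol a₀ t₂ = u := by
    have h2 : u - (sol a₀ t₂ - a₀) = a₀ := hfix
    have h3 : sol a₀ t₂ - u = 0 := by
      have := congrArg (fun x => sol a₀ t₂ - a₀ - (u - x)) h2
      simpa using this.symm
    have := sub_eq_zero.mp h3
    exact this
  have hk₀ : ‖sol a₀ t₂ - a₀‖ ≤ (1/2) * ‖a₀‖ := keyhalf a₀ (sol a₀) (hsolD a₀) (hsol0 a₀)
  have hanorm : ‖a₀‖ ≤ 2 * ‖u‖ := by
    have h2 : a₀ = u - (sol a₀ t₂ - a₀) := hfix.symm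
    have h3 : ‖a₀‖ ≤ ‖u‖ + ‖sol a₀ t₂ - a₀‖ := by
      conv_lhs => rw [h2]
      exact norm_sub_le _ _
    linarith
  -- the final solution
  refine ⟨a₀, sol a₀, fun t => ?_, ?_, ?_, ?_⟩
  · have hder := hsolD a₀ t
    simp only [hAdef, hfdef] at hder
    exact hder
  · -- w 0 = 0
    have h := gron_le_rev (w := sol a₀) (d := fun t => A t (sol a₀ t) + f t • a₀)
        (a := 0) (b := t₁) (δ := 0) (K := M) (ε := 0) ht₁pos.le (hsolD a₀)
        (by rw [hsol0]; simp)
        (fun t ht => by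
          show ‖A t (sol a₀ t) + f t • a₀‖ ≤ M * ‖sol a₀ t‖ + 0
          rw [hf_lt t ht.2, zero_smul, add_zero, add_zero]
          exact le_trans ((A t).le_opNorm _)
            (mul_le_mul_of_nonneg_right (hAb t) (norm_nonneg _)))
    rw [gronwallBound_ε0_δ0] at h
    exact norm_le_zero_iff.mp h
  · -- w T = v
    set D : ℝ → EuclideanSpace ℝ (Fin n) := fun t => sol a₀ t - p t with hDdef
    have hDd : ∀ t, HasDerivAt D ((A t) (D t) + f t • a₀) t := by
      intro t
      have h2 := (hsolD a₀ t).sub (hpD t)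
      have h3 : A t (sol a₀ t) + f t • a₀ - A t (p t) = A t (D t) + f t • a₀ := by
        simp only [hDdef, map_sub]
        abel
      rwa [h3] at h2
    have hDt₂ : D t₂ = 0 := by
      simp only [hDdef]
      rw [hWu, ← hudef, sub_self]
    have h := gron_le (a := t₂) (b := T) (δ := 0) (K := M) (ε := 0) ht₂T.le hDd
      (by rw [hDt₂]; simp)
      (fun t ht => by
        show ‖A t (D t) + f t • a₀‖ ≤ M * ‖D t‖ + 0
        rw [hf_gt t ht.1, zero_smul, add_zero, add_zero]
        exact le_trans ((A t).le_opNorm _)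
          (mul_le_mul_of_nonneg_right (hAb t) (norm_nonneg _)))
    rw [gronwallBound_ε0_δ0] at h
    have hDT : D T = 0 := norm_le_zero_iff.mp h
    have := sub_eq_zero.mp (by simpa only [hDdef] using hDT)
    rw [this, hpT]
  · -- norm bound
    have habs : |T - tstar| = T - tstar := abs_of_pos (by linarith)
    have hTt₂ : M * (T - t₂) ≤ (M+2) * |T - tstar| := by
      rw [habs, ht₂]
      nlinarith
    have e1 : Real.exp (M*(T-t₂)) ≤ Real.exp ((M+2)*|T-tstar|) := Real.exp_le_exp.mpr hTt₂
    have e2 : (0:ℝ) < Real.exp (M*(T-t₂)) := Real.exp_pos _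
    have e3 : (0:ℝ) ≤ ‖v‖ := norm_nonneg v
    have e4 : (2:ℝ) ≤ M + 2 := by linarith
    have e5 : Real.exp (M*(T-t₂)) * ‖v‖ ≤ Real.exp ((M+2)*|T-tstar|) * ‖v‖ :=
      mul_le_mul_of_nonneg_right e1 e3
    have e6 : (0:ℝ) ≤ Real.exp ((M+2)*|T-tstar|) * ‖v‖ := by positivity
    calc ‖a₀‖ ≤ 2 * ‖u‖ := hanorm
      _ ≤ 2 * (Real.exp (M*(T-t₂)) * ‖v‖) := by linarith
      _ ≤ (M+2) * Real.exp ((M+2)*|T-tstar|) * ‖v‖ := by nlinarith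
end

section
/- Fix a real number α > 0 and define 𝔇 ⊆ [0,1] as in the context. Then 𝔇 has full Lebesgue measure in [0,1]: the Lebesgue measure of [0,1] ∖ 𝔇 equals 0. -/
/-!
A point of `[0,1]` lying in no `𝔇_ℓ` is either rational or, since `h_ℓ(q) ≤ (ℓq)^{-(ℓ+1)}`, a
Liouville number: at level `ℓ = n + 2` its witness `p/q`, written as `2p/2q` to make the
denominator exceed `1`, is within `(2q)^{-n}` of it. Both the rationals and the Liouville numbers
are Lebesgue-null.
-/

open MeasureTheory

/-- `h_ℓ(q) = (ℓq)^(−ℓ q^α − 1)`. -/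
noncomputable def hFun (α : ℝ) (ℓ q : ℕ) : ℝ :=
  ((ℓ : ℝ) * (q : ℝ)) ^ (-((ℓ : ℝ) * (q : ℝ) ^ α + 1))

/-- `𝔇_ℓ`: points of `[0,1]` at distance more than `h_ℓ(q)` from every rational `p/q`. -/
def DioSet (α : ℝ) (ℓ : ℕ) : Set ℝ :=
  {s ∈ Set.Icc (0 : ℝ) 1 | ∀ p q : ℕ, 1 ≤ q → hFun α ℓ q < |s - (p : ℝ) / (q : ℝ)|}

lemma hFun_le_one_div_pow {α : ℝ} (hα : 0 ≤ α) {ℓ q : ℕ} (hℓ : 1 ≤ ℓ) (hq : 1 ≤ q) :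
    hFun α ℓ q ≤ 1 / ((ℓ : ℝ) * q) ^ (ℓ + 1) := by
  have hℓR : (1 : ℝ) ≤ ℓ := by exact_mod_cast hℓ
  have hqR : (1 : ℝ) ≤ q := by exact_mod_cast hq
  have hbase : (1 : ℝ) ≤ ℓ * q := one_le_mul_of_one_le_of_one_le hℓR hqR
  have hexp : (ℓ : ℝ) + 1 ≤ ℓ * (q : ℝ) ^ α + 1 := by
    have := Real.one_le_rpow hqR hα
    nlinarith
  calc hFun α ℓ q ≤ ((ℓ : ℝ) * q) ^ (-((ℓ : ℝ) + 1)) :=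
        Real.rpow_le_rpow_of_exponent_le hbase (neg_le_neg hexp)
    _ = 1 / ((ℓ : ℝ) * q) ^ (ℓ + 1) := by
        rw [Real.rpow_neg (by positivity), one_div, ← Real.rpow_natCast]
        push_cast
        rfl

lemma exists_rat_near_of_notMem_dioSet {α s : ℝ} {ℓ : ℕ} (hs : s ∈ Set.Icc (0 : ℝ) 1)
    (hsℓ : s ∉ DioSet α ℓ) : ∃ p q : ℕ, 1 ≤ q ∧ |s - p / q| ≤ hFun α ℓ q := by
  simpa [DioSet, hs.1, hs.2] using hsℓ

lemma liouville_of_forall_notMem_dioSet {α s : ℝ} (hα : 0 ≤ α) (hs : s ∈ Set.Icc (0 : ℝ) 1)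
    (hirr : Irrational s) (hbad : ∀ ℓ : ℕ, 1 ≤ ℓ → s ∉ DioSet α ℓ) : Liouville s := by
  intro n
  obtain ⟨p, q, hq, hpq⟩ := exists_rat_near_of_notMem_dioSet hs (hbad (n + 2) (by omega))
  have hqR : (1 : ℝ) ≤ q := by exact_mod_cast hq
  have hden : (2 * q : ℝ) ^ n < ((n + 2 : ℕ) * q : ℝ) ^ (n + 2 + 1) :=
    calc (2 * q : ℝ) ^ n ≤ ((n + 2 : ℕ) * q : ℝ) ^ n := by gcongr; push_cast; linarith
      _ < ((n + 2 : ℕ) * q : ℝ) ^ (n + 2 + 1) :=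
        pow_lt_pow_right₀ (by push_cast; nlinarith) (by omega)
  have hfrac : ((2 * p : ℤ) : ℝ) / ((2 * q : ℤ) : ℝ) = (p : ℝ) / q := by
    push_cast
    exact mul_div_mul_left _ _ two_ne_zero
  refine ⟨2 * p, 2 * q, by omega, ?_, ?_⟩
  · rw [hfrac]
    simpa using hirr.ne_rat (p / q)
  · rw [hfrac]
    calc |s - p / q| ≤ hFun α (n + 2) q := hpq
      _ ≤ 1 / ((n + 2 : ℕ) * q : ℝ) ^ (n + 2 + 1) := hFun_le_one_div_pow hα (by omega) hq
      _ < 1 / ((2 * q : ℤ) : ℝ) ^ n := by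
        push_cast at hden ⊢
        exact one_div_lt_one_div_of_lt (by positivity) hden

/-- For `α > 0` the set `𝔇 = ⋃_{ℓ ≥ 1} 𝔇_ℓ` has full Lebesgue measure in
`[0,1]`: the Lebesgue measure of `[0,1] ∖ 𝔇` is `0`. -/
theorem dioSet_full_measure (α : ℝ) (hα : 0 < α) :
    volume (Set.Icc (0 : ℝ) 1 \ ⋃ ℓ : ℕ, ⋃ _ : 1 ≤ ℓ, DioSet α ℓ) = 0 := by
  refine measure_mono_null (t := {x : ℝ | Liouville x} ∪ Set.range ((↑) : ℚ → ℝ)) ?_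
    (measure_union_null volume_setOfPred_liouville ((Set.countable_range _).measure_zero _))
  rintro s ⟨hs, hns⟩
  simp only [Set.mem_iUnion, not_exists] at hns
  by_cases hirr : Irrational s
  · exact Or.inl (liouville_of_forall_notMem_dioSet hα.le hs hirr hns)
  · exact Or.inr (not_not.mp hirr)
end

section
/- Fix a real number α > 0 and define 𝔇 ⊆ [0,1] as in the context. Then 𝔇 is a meager subset of [0,1] (it is contained in a countable union of nowhere dense subsets of [0,1]); in particular, 𝔇 is not Baire generic, i.e. 𝔇 does not contain any countable intersection of dense open subsets of [0,1]. -/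
lemma hFun_pos (α : ℝ) {ℓ q : ℕ} (hℓ : 1 ≤ ℓ) (hq : 1 ≤ q) : 0 < hFun α ℓ q := by
  apply Real.rpow_pos_of_pos
  have h1 : (0:ℝ) < ℓ := by exact_mod_cast hℓ
  have h2 : (0:ℝ) < q := by exact_mod_cast hq
  positivity

/-- The closed superset of `𝔇_ℓ`. -/
def CSet (α : ℝ) (ℓ : ℕ) : Set ℝ :=
  {s : ℝ | ∀ p q : ℕ, 1 ≤ q → hFun α ℓ q ≤ |s - (p : ℝ) / (q : ℝ)|}

lemma isClosed_CSet (α : ℝ) (ℓ : ℕ) : IsClosed (CSet α ℓ) := by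
  have : CSet α ℓ = ⋂ (p : ℕ), ⋂ (q : ℕ), ⋂ (_ : 1 ≤ q),
      {s : ℝ | hFun α ℓ q ≤ |s - (p : ℝ) / (q : ℝ)|} := by
    ext s; simp [CSet]
  rw [this]
  refine isClosed_iInter fun p => isClosed_iInter fun q => isClosed_iInter fun _ => ?_
  exact isClosed_le continuous_const ((continuous_id.sub continuous_const).abs)

/-- Any point of `[0,1]` can be approximated by `p/q ∈ [0,1]`. -/
lemma exists_rat_close {x ε : ℝ} (hx : x ∈ Set.Icc (0:ℝ) 1) (hε : 0 < ε) :
    ∃ p q : ℕ, 1 ≤ q ∧ (p:ℝ)/(q:ℝ) ∈ Set.Icc (0:ℝ) 1 ∧ |x - (p:ℝ)/(q:ℝ)| < ε := by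
  obtain ⟨r, hr⟩ := exists_rat_near x hε
  set r' : ℚ := min 1 (max 0 r) with hr'
  have h0 : (0:ℚ) ≤ r' := le_min (by norm_num) (le_max_left 0 r)
  have h1 : r' ≤ 1 := min_le_left 1 _
  have hclose : |x - (r' : ℝ)| < ε := by
    have hx0 := hx.1; have hx1 := hx.2
    have hcast : (r' : ℝ) = min 1 (max 0 (r : ℝ)) := by push_cast [hr']; ring_nf
    rw [hcast, abs_lt]
    rcases abs_lt.1 hr with ⟨ha, hb⟩
    rcases le_or_gt (r:ℝ) 0 with h|h
    · rw [max_eq_left h, min_eq_right (by norm_num : (0:ℝ) ≤ 1)]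
      constructor <;> linarith
    · rw [max_eq_right h.le]
      rcases le_or_gt (r:ℝ) 1 with h2|h2
      · rw [min_eq_right h2]; constructor <;> linarith
      · rw [min_eq_left h2.le]; constructor <;> linarith
  have hnum : 0 ≤ r'.num := Rat.num_nonneg.mpr h0
  refine ⟨r'.num.toNat, r'.den, r'.pos, ?_, ?_⟩
  · have : ((r'.num.toNat : ℝ)) / (r'.den : ℝ) = (r' : ℝ) := by
      rw [Rat.cast_def]
      congr 1
      exact_mod_cast Int.toNat_of_nonneg hnum
    rw [this]
    exact ⟨by exact_mod_cast h0, by exact_mod_cast h1⟩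
  · have : ((r'.num.toNat : ℝ)) / (r'.den : ℝ) = (r' : ℝ) := by
      rw [Rat.cast_def]
      congr 1
      exact_mod_cast Int.toNat_of_nonneg hnum
    rw [this]; exact hclose

/-- For `α > 0`, the set `𝔇 = ⋃_{ℓ ≥ 1} 𝔇_ℓ`, viewed inside the topological
space `[0,1]`, is meager (contained in a countable union of nowhere dense sets); in particular it
is not Baire generic: it contains no countable intersection of dense open subsets of `[0,1]`. -/
theorem dioSet_meager (α : ℝ) (hα : 0 < α) :
    (∃ f : ℕ → Set (Set.Icc (0 : ℝ) 1),
        (∀ k, IsNowhereDense (f k)) ∧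
        {x : Set.Icc (0 : ℝ) 1 | (x : ℝ) ∈ ⋃ ℓ : ℕ, ⋃ _ : 1 ≤ ℓ, DioSet α ℓ} ⊆ ⋃ k, f k) ∧
    ¬ (∃ g : ℕ → Set (Set.Icc (0 : ℝ) 1),
        (∀ k, IsOpen (g k)) ∧ (∀ k, Dense (g k)) ∧
        (⋂ k, g k) ⊆ {x : Set.Icc (0 : ℝ) 1 | (x : ℝ) ∈ ⋃ ℓ : ℕ, ⋃ _ : 1 ≤ ℓ, DioSet α ℓ}) := by
  haveI : Nonempty (Set.Icc (0:ℝ) 1) := ⟨⟨0, by norm_num⟩⟩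
  set f : ℕ → Set (Set.Icc (0:ℝ) 1) := fun k => Subtype.val ⁻¹' CSet α (k+1) with hf
  have hclosed : ∀ k, IsClosed (f k) := fun k =>
    (isClosed_CSet α (k+1)).preimage continuous_subtype_val
  have hND : ∀ k, IsNowhereDense (f k) := by
    intro k
    rw [(hclosed k).isNowhereDense_iff]
    rw [Set.eq_empty_iff_forall_notMem]
    intro x hx
    rw [mem_interior_iff_mem_nhds, Metric.mem_nhds_iff] at hx
    obtain ⟨ε, hε, hball⟩ := hx
    obtain ⟨p, q, hq, hmem, hclose⟩ := exists_rat_close x.2 hε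
    have hy : (⟨(p:ℝ)/(q:ℝ), hmem⟩ : Set.Icc (0:ℝ) 1) ∈ f k := by
      apply hball
      rw [Metric.mem_ball, Subtype.dist_eq, Real.dist_eq, abs_sub_comm]
      exact hclose
    have := hy p q hq
    simp only [sub_self, abs_zero] at this
    exact absurd this (not_le.mpr (hFun_pos α (Nat.le_add_left 1 k) hq))
  have hsub : {x : Set.Icc (0 : ℝ) 1 | (x : ℝ) ∈ ⋃ ℓ : ℕ, ⋃ _ : 1 ≤ ℓ, DioSet α ℓ} ⊆ ⋃ k, f k := by
    intro x hx
    simp only [Set.mem_setOf_eq, Set.mem_iUnion] at hx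
    obtain ⟨ℓ, hℓ, hmem, hD⟩ := hx
    refine Set.mem_iUnion.2 ⟨ℓ - 1, ?_⟩
    have hℓ' : ℓ - 1 + 1 = ℓ := Nat.succ_pred_eq_of_pos hℓ
    simp only [hf, Set.mem_preimage, hℓ']
    intro p q hq
    exact (hD p q hq).le
  refine ⟨⟨f, hND, hsub⟩, ?_⟩
  rintro ⟨g, hgo, hgd, hgs⟩
  have hT : (⋂ k, g k) ∈ residual (Set.Icc (0:ℝ) 1) :=
    (countable_iInter_mem.mpr fun k => residual_of_dense_open (hgo k) (hgd k))
  have hM : {x : Set.Icc (0 : ℝ) 1 | (x : ℝ) ∈ ⋃ ℓ : ℕ, ⋃ _ : 1 ≤ ℓ, DioSet α ℓ} ∈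
      residual (Set.Icc (0:ℝ) 1) := Filter.mem_of_superset hT hgs
  have hmeagre : IsMeagre {x : Set.Icc (0 : ℝ) 1 | (x : ℝ) ∈ ⋃ ℓ : ℕ, ⋃ _ : 1 ≤ ℓ, DioSet α ℓ} := by
    refine IsMeagre.mono hsub (isMeagre_iUnion fun k => ?_)
    have hcompl := (isClosed_isNowhereDense_iff_compl.mp ⟨hclosed k, hND k⟩)
    exact residual_of_dense_open hcompl.1 hcompl.2
  haveI : CompleteSpace (Set.Icc (0:ℝ) 1) := isClosed_Icc.completeSpace_coe
  have hd := dense_of_mem_residual (Filter.inter_mem hM hmeagre)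
  rw [Set.inter_compl_self] at hd
  obtain ⟨x, hx⟩ := hd.nonempty
  exact hx
end
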